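/- arXiv:1504.02765 — 7 statements merged into one kernel-verified Lean document; each statement's English description precedes it below -/
import Mathlib

section
/- Let B ⊆ ℝ be a Borel set and let g₁, g₂ be gauge functions such that 𝓗^{min(g₁,g₂)}(B) = 0, where min(g₁,g₂) is the pointwise minimum. Then there exist disjoint Borel sets B₁, B₂ with B = B₁ ∪ B₂, 𝓗^{g₁}(B₁) = 0 and 𝓗^{g₂}(B₂) = 0. -/
open MeasureTheory Set

/-- A gauge function: a monotone increasing, right continuous function
`g : [0,∞) → [0,∞)`. -/
def IsGauge (g : ℝ → ℝ) : Prop :=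
  MonotoneOn g (Ici 0) ∧ (∀ x ∈ Ici (0 : ℝ), ContinuousWithinAt g (Ici x) x) ∧
    ∀ x ∈ Ici (0 : ℝ), 0 ≤ g x

/-- The (generalised) Hausdorff measure `𝓗^g` with gauge function `g`. -/
noncomputable def gaugeMeasure (g : ℝ → ℝ) : Measure ℝ :=
  Measure.mkMetric (fun d => ENNReal.ofReal (g d.toReal))

open EMetric Filter ENNReal Topology in
/-- If a set `S` admits, along `atTop`, covers with diameters `≤ n⁻¹` whose `g`-sums are
bounded by a sequence tending to `0`, then `gaugeMeasure g S = 0`. -/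
lemma gaugeMeasure_null_of_covers (g : ℝ → ℝ) (S : Set ℝ) (ι : ℕ → Type) [∀ n, Countable (ι n)]
    (T : ∀ n, ι n → Set ℝ)
    (hd : ∀ᶠ n in atTop, ∀ i, diam (T n i) ≤ (n : ℝ≥0∞)⁻¹)
    (hc : ∀ᶠ n in atTop, S ⊆ ⋃ i, T n i)
    (bound : ℕ → ℝ≥0∞) (hb : Tendsto bound atTop (𝓝 0))
    (hsb : ∀ᶠ n in atTop,
      (∑' i, ENNReal.ofReal (g (diam (T n i)).toReal)) ≤ bound n) :
    gaugeMeasure g S = 0 := by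
  have h := Measure.mkMetric_le_liminf_tsum S (fun n : ℕ => (n : ℝ≥0∞)⁻¹)
    ENNReal.tendsto_inv_nat_nhds_zero T hd hc (fun d => ENNReal.ofReal (g d.toReal))
  rw [gaugeMeasure]
  refine le_antisymm (h.trans ?_) (zero_le)
  calc liminf (fun n => ∑' i, ENNReal.ofReal (g (diam (T n i)).toReal)) atTop
      ≤ liminf bound atTop := liminf_le_liminf hsb
    _ = 0 := hb.liminf_eq

open EMetric Filter ENNReal Topology in
theorem stmt3 (B : Set ℝ) (hB : MeasurableSet B) (g₁ g₂ : ℝ → ℝ)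
    (hg₁ : IsGauge g₁) (hg₂ : IsGauge g₂)
    (hmin : gaugeMeasure (fun x => min (g₁ x) (g₂ x)) B = 0) :
    ∃ B₁ B₂ : Set ℝ, MeasurableSet B₁ ∧ MeasurableSet B₂ ∧ Disjoint B₁ B₂ ∧
      B = B₁ ∪ B₂ ∧ gaugeMeasure g₁ B₁ = 0 ∧ gaugeMeasure g₂ B₂ = 0 := by
  classical
  rw [gaugeMeasure, Measure.mkMetric_apply] at hmin
  simp only [ENNReal.iSup_eq_zero] at hmin
  -- Extract good covers at every scale.
  have hex : ∀ n : ℕ, ∃ t : ℕ → Set ℝ, B ⊆ ⋃ i, t i ∧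
      (∀ i, diam (t i) ≤ ((n : ℝ≥0∞) + 1)⁻¹) ∧
      (∑' i, ⨆ _ : (t i).Nonempty,
        ENNReal.ofReal (min (g₁ (diam (t i)).toReal) (g₂ (diam (t i)).toReal))) ≤ 2⁻¹ ^ n := by
    intro n
    have hr : (0 : ℝ≥0∞) < ((n : ℝ≥0∞) + 1)⁻¹ :=
      ENNReal.inv_pos.2 (by simp [ENNReal.add_eq_top])
    have h2 := hmin _ hr
    have h3 : (⨅ (t : ℕ → Set ℝ) (_ : B ⊆ iUnion t)
        (_ : ∀ m, diam (t m) ≤ ((n : ℝ≥0∞) + 1)⁻¹),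
        ∑' m, ⨆ _ : (t m).Nonempty,
          ENNReal.ofReal (min (g₁ (diam (t m)).toReal) (g₂ (diam (t m)).toReal)))
        < 2⁻¹ ^ n := by
      exact lt_of_eq_of_lt h2 (ENNReal.pow_pos (by norm_num) n)
    simp only [iInf_lt_iff] at h3
    obtain ⟨t, ht1, ht2, ht3⟩ := h3
    exact ⟨t, ht1, ht2, ht3.le⟩
  choose t hcov hdiam hsum using hex
  set cond : ℕ → ℕ → Prop :=
    fun n i => g₁ (diam (t n i)).toReal ≤ g₂ (diam (t n i)).toReal with hcond
  set A₁ : ℕ → Set ℝ := fun n => ⋃ i, if cond n i then closure (t n i) else ∅ with hA₁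
  set A₂ : ℕ → Set ℝ := fun n => ⋃ i, if cond n i then ∅ else closure (t n i) with hA₂
  have hA₁m : ∀ n, MeasurableSet (A₁ n) := fun n =>
    MeasurableSet.iUnion fun i => by
      split_ifs
      · exact isClosed_closure.measurableSet
      · exact MeasurableSet.empty
  have hA₂m : ∀ n, MeasurableSet (A₂ n) := fun n =>
    MeasurableSet.iUnion fun i => by
      split_ifs
      · exact MeasurableSet.empty
      · exact isClosed_closure.measurableSet
  set B₁ : Set ℝ := B ∩ ⋂ N, ⋃ n, ⋃ _ : N ≤ n, A₁ n with hB₁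
  refine ⟨B₁, B \ B₁, ?_, ?_, disjoint_sdiff_self_right, ?_, ?_, ?_⟩
  · exact hB.inter (MeasurableSet.iInter fun N =>
      MeasurableSet.iUnion fun n => MeasurableSet.iUnion fun _ => hA₁m n)
  · exact hB.diff (hB.inter (MeasurableSet.iInter fun N =>
      MeasurableSet.iUnion fun n => MeasurableSet.iUnion fun _ => hA₁m n))
  · exact (union_diff_cancel inter_subset_left).symm
  -- `gaugeMeasure g₁ B₁ = 0`
  · refine gaugeMeasure_null_of_covers g₁ B₁
      (fun N => ↥{p : ℕ × ℕ | N ≤ p.1 ∧ (t p.1 p.2).Nonempty ∧ cond p.1 p.2})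
      (fun N p => closure (t p.val.1 p.val.2)) ?_ ?_
      (fun N => ∑' n, if N ≤ n then (2 : ℝ≥0∞)⁻¹ ^ n else 0) ?_ ?_
    · -- diameters
      refine Eventually.of_forall fun N p => ?_
      rw [EMetric.diam, Metric.ediam_closure]
      refine (hdiam p.val.1 p.val.2).trans ?_
      refine ENNReal.inv_le_inv' ?_
      exact le_trans (Nat.cast_le.2 p.2.1) (le_add_of_nonneg_right (zero_le))
    · -- covering
      refine Eventually.of_forall fun N x hx => ?_
      obtain ⟨hxB, hx2⟩ := hx
      have hx3 := mem_iInter.1 hx2 N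
      obtain ⟨n, hn⟩ := mem_iUnion.1 hx3
      obtain ⟨hNn, hxA⟩ := mem_iUnion.1 hn
      obtain ⟨i, hi⟩ := mem_iUnion.1 hxA
      by_cases hc : cond n i
      · rw [if_pos hc] at hi
        have hne : (t n i).Nonempty := closure_nonempty_iff.1 ⟨x, hi⟩
        exact mem_iUnion.2 ⟨⟨(n, i), hNn, hne, hc⟩, hi⟩
      · rw [if_neg hc] at hi; exact absurd hi (notMem_empty x)
    · -- bound tends to 0
      have hgeo : ∑' n : ℕ, (2 : ℝ≥0∞)⁻¹ ^ n = 2 := by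
        rw [ENNReal.tsum_geometric, ENNReal.one_sub_inv_two, inv_inv]
      have key : ∀ N : ℕ, (∑' n, if N ≤ n then (2 : ℝ≥0∞)⁻¹ ^ n else 0)
          = ∑' k, (2 : ℝ≥0∞)⁻¹ ^ (k + N) := by
        intro N
        rw [← Function.Injective.tsum_eq (f := fun n => if N ≤ n then (2 : ℝ≥0∞)⁻¹ ^ n else 0)
          (add_left_injective N) ?_]
        · refine tsum_congr fun k => ?_
          rw [if_pos (Nat.le_add_left N k)]
        · intro n hn
          have : N ≤ n := by
            by_contra h
            exact hn (by simp [if_neg h])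
          exact ⟨n - N, Nat.sub_add_cancel this⟩
      simp only [key]
      exact ENNReal.tendsto_sum_nat_add _ (by rw [hgeo]; exact ENNReal.ofNat_ne_top)
    · -- sum bound
      refine Eventually.of_forall fun N => ?_
      have e1 : (∑' p : ↥{p : ℕ × ℕ | N ≤ p.1 ∧ (t p.1 p.2).Nonempty ∧ cond p.1 p.2}, ENNReal.ofReal
            (g₁ (diam (closure (t p.val.1 p.val.2))).toReal))
          = ∑' q : ℕ × ℕ, Set.indicator
              {p : ℕ × ℕ | N ≤ p.1 ∧ (t p.1 p.2).Nonempty ∧ cond p.1 p.2}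
              (fun q => ENNReal.ofReal (g₁ (diam (t q.1 q.2)).toReal)) q := by
        simp only [EMetric.diam, Metric.ediam_closure]
        exact tsum_subtype {p : ℕ × ℕ | N ≤ p.1 ∧ (t p.1 p.2).Nonempty ∧ cond p.1 p.2}
          (fun q => ENNReal.ofReal (g₁ (diam (t q.1 q.2)).toReal))
      rw [e1]
      have e2 : ∀ q : ℕ × ℕ, Set.indicator
            {p : ℕ × ℕ | N ≤ p.1 ∧ (t p.1 p.2).Nonempty ∧ cond p.1 p.2}
            (fun q => ENNReal.ofReal (g₁ (diam (t q.1 q.2)).toReal)) q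
          ≤ (fun q : ℕ × ℕ => if N ≤ q.1 then
              (⨆ _ : (t q.1 q.2).Nonempty, ENNReal.ofReal
                (min (g₁ (diam (t q.1 q.2)).toReal) (g₂ (diam (t q.1 q.2)).toReal)))
              else 0) q := by
        intro q
        by_cases hq : q ∈ {p : ℕ × ℕ | N ≤ p.1 ∧ (t p.1 p.2).Nonempty ∧ cond p.1 p.2}
        · rw [Set.indicator_of_mem hq]
          obtain ⟨hq1, hq2, hq3⟩ := hq
          simp only [if_pos hq1, iSup_pos hq2]
          rw [min_eq_left hq3]
        · rw [Set.indicator_of_notMem hq]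
          exact zero_le
      refine le_trans (ENNReal.tsum_le_tsum e2) ?_
      rw [ENNReal.tsum_prod (f := fun a b => if N ≤ a then
        (⨆ _ : (t a b).Nonempty, ENNReal.ofReal
          (min (g₁ (diam (t a b)).toReal) (g₂ (diam (t a b)).toReal))) else 0)]
      refine ENNReal.tsum_le_tsum fun n => ?_
      by_cases hNn : N ≤ n
      · simp only [if_pos hNn]
        exact hsum n
      · simp only [if_neg hNn, tsum_zero, le_refl]
  -- `gaugeMeasure g₂ (B \ B₁) = 0`
  · set C : ℕ → Set ℝ := fun N => B ∩ ⋂ n, ⋂ _ : N ≤ n, A₂ n with hC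
    have hsub : B \ B₁ ⊆ ⋃ N, C N := by
      intro x hx
      obtain ⟨hxB, hx2⟩ := hx
      have : ¬ x ∈ ⋂ N, ⋃ n, ⋃ _ : N ≤ n, A₁ n := fun h => hx2 ⟨hxB, h⟩
      rw [mem_iInter] at this
      push_neg at this
      obtain ⟨N, hN⟩ := this
      simp only [mem_iUnion, not_exists] at hN
      refine mem_iUnion.2 ⟨N, hxB, mem_iInter.2 fun n => mem_iInter.2 fun hn => ?_⟩
      obtain ⟨i, hi⟩ := mem_iUnion.1 (hcov n hxB)
      by_cases hc : cond n i
      · exact absurd (mem_iUnion.2 ⟨i, by rw [if_pos hc]; exact subset_closure hi⟩)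
          (fun h => hN n hn h)
      · exact mem_iUnion.2 ⟨i, by rw [if_neg hc]; exact subset_closure hi⟩
    refine measure_mono_null hsub (measure_iUnion_null fun N => ?_)
    refine gaugeMeasure_null_of_covers g₂ (C N)
      (fun n => ↥{i : ℕ | (t n i).Nonempty ∧ ¬ cond n i})
      (fun n i => closure (t n i.val)) ?_ ?_ (fun n => 2⁻¹ ^ n)
      (ENNReal.tendsto_pow_atTop_nhds_zero_of_lt_one (by norm_num)) ?_
    · refine Eventually.of_forall fun n i => ?_
      rw [EMetric.diam, Metric.ediam_closure]
      exact (hdiam n i.val).trans (ENNReal.inv_le_inv'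
        (le_add_of_nonneg_right (zero_le)))
    · filter_upwards [eventually_ge_atTop N] with n hn x hx
      obtain ⟨hxB, hx2⟩ := hx
      have hx3 := mem_iInter.1 (mem_iInter.1 hx2 n) hn
      obtain ⟨i, hi⟩ := mem_iUnion.1 hx3
      by_cases hc : cond n i
      · rw [if_pos hc] at hi; exact absurd hi (notMem_empty x)
      · rw [if_neg hc] at hi
        have hne : (t n i).Nonempty := closure_nonempty_iff.1 ⟨x, hi⟩
        exact mem_iUnion.2 ⟨⟨i, hne, hc⟩, hi⟩
    · refine Eventually.of_forall fun n => ?_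
      have e1 : (∑' i : ↥{i : ℕ | (t n i).Nonempty ∧ ¬ cond n i}, ENNReal.ofReal (g₂ (diam (closure (t n i.val))).toReal))
          = ∑' i : ℕ, Set.indicator {i : ℕ | (t n i).Nonempty ∧ ¬ cond n i}
              (fun i => ENNReal.ofReal (g₂ (diam (t n i)).toReal)) i := by
        simp only [EMetric.diam, Metric.ediam_closure]
        exact tsum_subtype {i : ℕ | (t n i).Nonempty ∧ ¬ cond n i}
          (fun i => ENNReal.ofReal (g₂ (diam (t n i)).toReal))
      rw [e1]
      refine le_trans (ENNReal.tsum_le_tsum fun i => ?_) (hsum n)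
      by_cases hq : i ∈ {i : ℕ | (t n i).Nonempty ∧ ¬ cond n i}
      · rw [Set.indicator_of_mem hq]
        obtain ⟨hq1, hq2⟩ := hq
        rw [iSup_pos hq1, min_eq_right (le_of_not_ge hq2)]
      · rw [Set.indicator_of_notMem hq]
        exact zero_le
end

section
/- For each j ∈ ℕ let μ_j be a translation invariant Borel measure on ℝ, let a_j ≥ 0 with Σ_{j} a_j < ∞, and let K_j ⊆ [0, a_j] be a compact set with μ_j(K_j) = 1. Let K = { Σ_{j=0}^∞ x_j : x_j ∈ K_j for every j } (the series converges since 0 ≤ x_j ≤ a_j and Σ a_j < ∞). Suppose B ⊆ ℝ is a Borel set for which there exists an uncountable set T ⊆ ℝ such that the translates K + t (t ∈ T) are pairwise disjoint and all contained in B. Then there is no family of Borel sets (B_j)_{j∈ℕ} with B = ∪_j B_j such that each B_j is a countable union of sets of finite μ_j-measure. -/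
open MeasureTheory Set Filter
open scoped ENNReal Topology

/-- A Borel measure on `ℝ` is translation invariant if `μ(E + t) = μ(E)` for every
Borel set `E` and every `t`. -/
def IsTransInv (μ : Measure ℝ) : Prop :=
  ∀ (t : ℝ) (E : Set ℝ), MeasurableSet E → μ ((fun x => x + t) '' E) = μ E

/-- `B` is a countable union of sets of finite `μ`-measure. -/
def SigmaFiniteOnSet {α : Type*} [MeasurableSpace α] (μ : Measure α) (B : Set α) : Prop :=
  ∃ C : ℕ → Set α, B = ⋃ j, C j ∧ ∀ j, μ (C j) < ⊤

/-- The set of sums `Σ_j x_j` with `x_j ∈ K j` for every `j`. -/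
def sumSet (K : ℕ → Set ℝ) : Set ℝ :=
  {x | ∃ f : ℕ → ℝ, (∀ j, f j ∈ K j) ∧ HasSum f x}

lemma exists_quantile (ν : Measure ℝ) [IsProbabilityMeasure ν] {Q : Set ℝ}
    (hQc : IsCompact Q) (hQn : ν Qᶜ = 0) :
    ∃ g : ℝ → ℝ, Measurable g ∧ (∀ u ∈ Ioc (0:ℝ) 1, g u ∈ Q) ∧
      (volume.restrict (Ioc (0:ℝ) 1)).map g = ν := by
  have hQm : MeasurableSet Q := hQc.isClosed.measurableSet
  have hQ1 : ν Q = 1 := by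
    have h1 : (1:ℝ≥0∞) = ν univ := (measure_univ).symm
    have h2 : ν univ ≤ ν Q + ν Qᶜ := by
      calc ν univ = ν (Q ∪ Qᶜ) := by rw [union_compl_self]
        _ ≤ ν Q + ν Qᶜ := measure_union_le _ _
    rw [hQn, add_zero] at h2
    exact le_antisymm prob_le_one (h1 ▸ h2)
  have hQne : Q.Nonempty := by
    rcases Q.eq_empty_or_nonempty with h | h
    · exfalso; rw [h] at hQ1; simp at hQ1
    · exact h
  obtain ⟨lo, hlo⟩ := hQc.bddBelow
  obtain ⟨hi, hhi⟩ := hQc.bddAbove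
  have hνx : ∀ x, ν (Iic x) ≠ ⊤ := fun x => (measure_lt_top ν _).ne
  set F : ℝ → ℝ := fun x => (ν (Iic x)).toReal with hFdef
  have hFmono : Monotone F := fun x y hxy =>
    (ENNReal.toReal_le_toReal (hνx x) (hνx y)).mpr (measure_mono (Iic_subset_Iic.mpr hxy))
  have hF01 : ∀ x, 0 ≤ F x ∧ F x ≤ 1 := fun x =>
    ⟨ENNReal.toReal_nonneg, by
      have := prob_le_one (μ := ν) (s := Iic x)
      simpa [hFdef] using (ENNReal.toReal_le_toReal (hνx x) ENNReal.one_ne_top).mpr this⟩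
  have hFhi : ∀ x, hi ≤ x → F x = 1 := by
    intro x hx
    have : ν (Iic x) = 1 := le_antisymm prob_le_one
      (by rw [← hQ1]; exact measure_mono fun q hq => le_trans (hhi hq) hx)
    simp [hFdef, this]
  have hFlo : ∀ x, x < lo → F x = 0 := by
    intro x hx
    have : ν (Iic x) = 0 := by
      refine measure_mono_null (fun y hy => ?_) hQn
      intro hyQ
      have h1 : lo ≤ y := hlo hyQ
      have h2 : y ≤ x := hy
      linarith
    simp [hFdef, this]
  set S : ℝ → Set ℝ := fun u => {x | min u 1 ≤ F x ∧ lo ≤ x} with hSdef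
  have hS_up : ∀ u x y, x ∈ S u → x ≤ y → y ∈ S u := fun u x y hx hxy =>
    ⟨le_trans hx.1 (hFmono hxy), le_trans hx.2 hxy⟩
  have hS_ne : ∀ u, (S u).Nonempty := by
    intro u
    refine ⟨max hi lo, ?_, le_max_right _ _⟩
    rw [hFhi _ (le_max_left _ _)]
    exact min_le_right _ _
  have hS_bdd : ∀ u, BddBelow (S u) := fun u => ⟨lo, fun x hx => hx.2⟩
  set g : ℝ → ℝ := fun u => sInf (S u) with hgdef
  have hg_mono : Monotone g := by
    intro u v huv
    exact csInf_le_csInf (hS_bdd u) (hS_ne v)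
      (fun x hx => ⟨le_trans (min_le_min_right 1 huv) hx.1, hx.2⟩)
  -- membership of S at the inf, for u ∈ Ioc 0 1
  have hmem : ∀ u ∈ Ioc (0:ℝ) 1, u ≤ F (g u) := by
    rintro u ⟨hu0, hu1⟩
    have hmin : min u 1 = u := min_eq_left hu1
    have hxn : ∀ n : ℕ, g u + 1/(n+1) ∈ S u := by
      intro n
      have h1 : sInf (S u) < g u + 1/(n+1) := by
        have hp : (0:ℝ) < 1/(n+1) := by positivity
        show g u < g u + 1/(n+1)
        linarith
      obtain ⟨y, hy, hy2⟩ := (csInf_lt_iff (hS_bdd u) (hS_ne u)).mp h1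
      exact hS_up u y _ hy hy2.le
    have hiic : Iic (g u) = ⋂ n : ℕ, Iic (g u + 1/(n+1)) := by
      ext y
      simp only [mem_Iic, mem_iInter]
      constructor
      · intro h n
        have hp : (0:ℝ) < 1/(n+1) := by positivity
        linarith
      · intro h
        refine le_of_forall_pos_le_add fun ε hε => ?_
        obtain ⟨n, hn⟩ := exists_nat_one_div_lt hε
        exact le_trans (h n) (by linarith)
    have htend : Tendsto (fun n : ℕ => ν (Iic (g u + 1/(n+1)))) atTop
        (𝓝 (ν (⋂ n : ℕ, Iic (g u + 1/(n+1))))) := by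
      refine tendsto_measure_iInter_atTop (fun n => measurableSet_Iic.nullMeasurableSet)
        (fun n m hnm => Iic_subset_Iic.mpr ?_) ⟨0, hνx _⟩
      have hc : (n:ℝ) ≤ m := Nat.cast_le.mpr hnm
      have : (1:ℝ)/(m+1) ≤ 1/(n+1) := by
        apply one_div_le_one_div_of_le
        · positivity
        · linarith
      linarith
    have hge : ENNReal.ofReal u ≤ ν (⋂ n : ℕ, Iic (g u + 1/(n+1))) := by
      refine ge_of_tendsto htend (Eventually.of_forall fun n => ?_)
      have := (hxn n).1
      rw [hmin] at this
      exact ENNReal.ofReal_le_of_le_toReal this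
    rw [← hiic] at hge
    have := ENNReal.toReal_mono (hνx _) hge
    rwa [ENNReal.toReal_ofReal hu0.le] at this
  have hiff : ∀ u ∈ Ioc (0:ℝ) 1, ∀ x, (g u ≤ x ↔ u ≤ F x) := by
    rintro u hu x
    obtain ⟨hu0, hu1⟩ := hu
    constructor
    · intro h; exact le_trans (hmem u ⟨hu0, hu1⟩) (hFmono h)
    · intro h
      have hlox : lo ≤ x := by
        by_contra hc
        rw [hFlo x (lt_of_not_ge hc)] at h; linarith
      exact csInf_le (hS_bdd u) ⟨by rw [min_eq_left hu1]; exact h, hlox⟩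
  have hval : ∀ u ∈ Ioc (0:ℝ) 1, g u ∈ Q := by
    rintro u hu
    rw [← hQc.isClosed.closure_eq]
    rw [Metric.mem_closure_iff]
    intro ε hε
    have h1 : F (g u - ε) < u := by
      by_contra hc
      have := ((hiff u hu (g u - ε)).mpr (not_lt.mp hc))
      linarith
    have h2 : u ≤ F (g u) := hmem u hu
    have hne : (Q ∩ Ioc (g u - ε) (g u)).Nonempty := by
      by_contra hc
      have hsub : Ioc (g u - ε) (g u) ⊆ Qᶜ := by
        intro y hy hyQ
        exact hc ⟨y, hyQ, hy⟩
      have h0 : ν (Ioc (g u - ε) (g u)) = 0 := measure_mono_null hsub hQn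
      have : ν (Iic (g u)) ≤ ν (Iic (g u - ε)) := by
        calc ν (Iic (g u)) = ν (Iic (g u - ε) ∪ Ioc (g u - ε) (g u)) := by
              rw [Iic_union_Ioc_eq_Iic (by linarith)]
          _ ≤ ν (Iic (g u - ε)) + ν (Ioc (g u - ε) (g u)) := measure_union_le _ _
          _ = ν (Iic (g u - ε)) := by rw [h0, add_zero]
      have : F (g u) ≤ F (g u - ε) :=
        (ENNReal.toReal_le_toReal (hνx _) (hνx _)).mpr this
      linarith
    obtain ⟨q, hqQ, hq1, hq2⟩ := hne
    exact ⟨q, hqQ, by rw [Real.dist_eq, abs_of_nonneg (by linarith)]; linarith⟩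
  have hg_meas : Measurable g := hg_mono.measurable
  haveI : IsProbabilityMeasure (volume.restrict (Ioc (0:ℝ) 1)) := by
    constructor
    rw [Measure.restrict_apply_univ, Real.volume_Ioc]
    norm_num
  haveI : IsProbabilityMeasure ((volume.restrict (Ioc (0:ℝ) 1)).map g) :=
    Measure.isProbabilityMeasure_map hg_meas.aemeasurable
  refine ⟨g, hg_meas, hval, ?_⟩
  refine Measure.ext_of_Iic _ _ fun x => ?_
  rw [Measure.map_apply hg_meas measurableSet_Iic,
    Measure.restrict_apply (hg_meas measurableSet_Iic)]
  have hset : g ⁻¹' (Iic x) ∩ Ioc 0 1 = Ioc 0 (F x) := by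
    ext u
    simp only [mem_inter_iff, mem_preimage, mem_Iic, mem_Ioc]
    constructor
    · rintro ⟨h1, h2, h3⟩
      exact ⟨h2, (hiff u ⟨h2, h3⟩ x).mp h1⟩
    · rintro ⟨h1, h2⟩
      have hu : u ∈ Ioc (0:ℝ) 1 := ⟨h1, le_trans h2 (hF01 x).2⟩
      exact ⟨(hiff u hu x).mpr h2, hu.1, hu.2⟩
  rw [hset, Real.volume_Ioc]
  rw [show F x - 0 = F x by ring, hFdef]
  exact ENNReal.ofReal_toReal (hνx x)

lemma summable_of_mem_Icc {a : ℕ → ℝ} (hsum : Summable a) {f : ℕ → ℝ}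
    (hf : ∀ j, f j ∈ Icc 0 (a j)) : Summable f :=
  Summable.of_nonneg_of_le (fun j => (hf j).1) (fun j => (hf j).2) hsum

lemma isCompact_sumSet (a : ℕ → ℝ) (hsum : Summable a)
    (K : ℕ → Set ℝ) (hKc : ∀ j, IsCompact (K j)) (hKsub : ∀ j, K j ⊆ Icc 0 (a j)) :
    IsCompact (sumSet K) := by
  set P' : Set (ℕ → ℝ) := Set.pi univ (fun j => Icc 0 (a j)) with hP'def
  have hcont : ContinuousOn (fun f : ℕ → ℝ => ∑' j, f j) P' := by
    apply TendstoUniformlyOn.continuousOn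
      (F := fun n (f : ℕ → ℝ) => ∑ j ∈ Finset.range n, f j) (p := atTop)
    · rw [Metric.tendstoUniformlyOn_iff]
      intro ε hε
      have h1 : Tendsto (fun n => ∑ j ∈ Finset.range n, a j) atTop (𝓝 (∑' j, a j)) :=
        hsum.hasSum.tendsto_sum_nat
      have htail : Tendsto (fun n => ∑' j, a (j + n)) atTop (𝓝 0) := by
        have heq : (fun n => ∑' j, a (j + n))
            = fun n => (∑' j, a j) - ∑ j ∈ Finset.range n, a j := by
          funext n
          rw [← Summable.sum_add_tsum_nat_add n hsum]
          ring
        rw [heq]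
        have := (tendsto_const_nhds (x := ∑' j, a j) (f := atTop)).sub h1
        simpa using this
      filter_upwards [htail.eventually (gt_mem_nhds hε)] with n hn f hf
      have hfs : Summable f := summable_of_mem_Icc hsum fun j => hf j (mem_univ j)
      have hfa : ∀ j, f j ∈ Icc 0 (a j) := fun j => hf j (mem_univ j)
      have hts : Summable (fun j => f (j + n)) := (summable_nat_add_iff n).mpr hfs
      have htsa : Summable (fun j => a (j + n)) := (summable_nat_add_iff n).mpr hsum
      have hsplit : ∑' j, f j - ∑ j ∈ Finset.range n, f j = ∑' j, f (j + n) := by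
        rw [← Summable.sum_add_tsum_nat_add n hfs]; ring
      rw [Real.dist_eq, hsplit, abs_of_nonneg (tsum_nonneg fun j => (hfa _).1)]
      calc ∑' j, f (j + n) ≤ ∑' j, a (j + n) := Summable.tsum_le_tsum (fun j => (hfa _).2) hts htsa
        _ < ε := hn
    · refine Frequently.of_forall fun n => ?_
      exact (continuous_finset_sum _ fun j _ => continuous_apply j).continuousOn
  have hPc : IsCompact (Set.pi univ K) := isCompact_univ_pi hKc
  have himg : sumSet K = (fun f : ℕ → ℝ => ∑' j, f j) '' (Set.pi univ K) := by
    ext x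
    constructor
    · rintro ⟨f, hf, hsf⟩
      exact ⟨f, fun j _ => hf j, hsf.tsum_eq⟩
    · rintro ⟨f, hf, rfl⟩
      refine ⟨f, fun j => hf j (mem_univ j), ?_⟩
      exact (summable_of_mem_Icc hsum fun j => hKsub j (hf j (mem_univ j))).hasSum
  rw [himg]
  exact hPc.image_of_continuousOn
    (hcont.mono (fun f hf j hj => hKsub j (hf j (mem_univ j))))

-- preimage of translation = image of opposite translation
lemma preimage_add_eq_image (c : ℝ) (E : Set ℝ) :
    (fun y => y + c) ⁻¹' E = (fun x => x + (-c)) '' E := by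
  ext x
  constructor
  · intro hx
    exact ⟨x + c, hx, by ring⟩
  · rintro ⟨m, hm, rfl⟩
    simpa [add_assoc] using hm

lemma transinv_null {μ : Measure ℝ} (hinv : IsTransInv μ) {E : Set ℝ}
    (hE : MeasurableSet E) (h0 : μ E = 0) (c : ℝ) : μ ((fun y => y + c) ⁻¹' E) = 0 := by
  rw [preimage_add_eq_image, hinv (-c) E hE, h0]

section Core

local instance : Fact ((0:ℝ) < 1) := ⟨one_pos⟩

noncomputable abbrev Gc := AddCircle (1:ℝ)
abbrev Om := ℕ → Gc

noncomputable def pcOm : TopologicalSpace.PositiveCompacts Om :=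
  ⟨⟨univ, isCompact_univ⟩, by simp⟩

noncomputable def lam : Measure Om := Measure.addHaarMeasure pcOm

instance : Measure.IsAddLeftInvariant lam := by unfold lam; infer_instance

instance : IsProbabilityMeasure lam := by
  constructor
  have := Measure.addHaarMeasure_self (K₀ := pcOm)
  simpa [lam, pcOm] using this

instance : IsProbabilityMeasure (volume : Measure Gc) := by
  constructor
  rw [AddCircle.measure_univ]
  exact ENNReal.ofReal_one

-- the uniform variable on Gc with values in Ioc 0 1
noncomputable def unif : Gc → ℝ := fun u => ((AddCircle.measurableEquivIoc 1 0) u : ℝ)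

lemma unif_measurable : Measurable unif :=
  measurable_subtype_coe.comp (AddCircle.measurableEquivIoc 1 0).measurable

lemma unif_mem (u : Gc) : unif u ∈ Ioc (0:ℝ) 1 := by
  have h := ((AddCircle.measurableEquivIoc 1 0) u).2
  simpa [unif] using h

lemma unif_map : (volume : Measure Gc).map unif = volume.restrict (Ioc (0:ℝ) 1) := by
  have hmp := AddCircle.measurePreserving_mk 1 0
  have hmk : Measurable ((↑) : ℝ → Gc) := hmp.measurable
  have h1 : (volume : Measure Gc) = (volume.restrict (Ioc (0:ℝ) (0+1))).map ((↑) : ℝ → Gc) :=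
    hmp.map_eq.symm
  rw [h1, Measure.map_map unif_measurable hmk]
  have h2 : ∀ᵐ x ∂(volume.restrict (Ioc (0:ℝ) (0+1))), (unif ∘ ((↑) : ℝ → Gc)) x = x := by
    filter_upwards [ae_restrict_mem measurableSet_Ioc] with x hx
    show ((AddCircle.measurableEquivIoc 1 0) (x : Gc) : ℝ) = x
    have heq : (AddCircle.equivIoc 1 0) (x : Gc) = ⟨x, hx⟩ := by
      rw [Equiv.apply_eq_iff_eq_symm_apply]
      rfl
    show ((AddCircle.equivIoc 1 0) (x : Gc) : ℝ) = x
    rw [heq]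
  rw [Measure.map_congr h2]
  rw [show (fun x : ℝ => x) = id from rfl, Measure.map_id]
  norm_num

end Core

section Escape

lemma core_escape (μ : ℕ → Measure ℝ) (hinv : ∀ j, IsTransInv (μ j))
    (a : ℕ → ℝ) (hsum : Summable a)
    (K : ℕ → Set ℝ) (hKc : ∀ j, IsCompact (K j)) (hKsub : ∀ j, K j ⊆ Icc 0 (a j))
    (hKμ : ∀ j, μ j (K j) = 1)
    (M : ℕ → Set ℝ) (hM : ∀ j, MeasurableSet (M j)) (hM0 : ∀ j, μ j (M j) = 0) :
    ∃ x ∈ sumSet K, ∀ j, x ∉ M j := by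
  classical
  have hKm : ∀ j, MeasurableSet (K j) := fun j => (hKc j).isClosed.measurableSet
  haveI : ∀ j, IsProbabilityMeasure ((μ j).restrict (K j)) := fun j =>
    ⟨by rw [Measure.restrict_apply_univ]; exact hKμ j⟩
  have hνc : ∀ j, (μ j).restrict (K j) (K j)ᶜ = 0 := fun j => by
    rw [Measure.restrict_apply (hKm j).compl, compl_inter_self, measure_empty]
  choose gq hgq_meas hgq_mem hgq_map using
    fun j => exists_quantile ((μ j).restrict (K j)) (hKc j) (hνc j)
  set g : ℕ → Gc → ℝ := fun j u => gq j (unif u) with hgdef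
  have hg_meas : ∀ j, Measurable (g j) := fun j => (hgq_meas j).comp unif_measurable
  have hg_memK : ∀ j u, g j u ∈ K j := fun j u => hgq_mem j _ (unif_mem u)
  have hg_mem : ∀ j u, g j u ∈ Icc 0 (a j) := fun j u => hKsub j (hg_memK j u)
  have hg_map : ∀ j, (volume : Measure Gc).map (g j) = (μ j).restrict (K j) := fun j => by
    rw [show g j = (gq j) ∘ unif from rfl,
      ← Measure.map_map (hgq_meas j) unif_measurable, unif_map, hgq_map j]
  set Φ : Om → ℝ := fun ω => ∑' j, g j (ω j) with hΦdef
  have hsummand : ∀ ω : Om, Summable fun j => g j (ω j) := fun ω =>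
    summable_of_mem_Icc hsum fun j => hg_mem j (ω j)
  have hΦ_meas : Measurable Φ := by
    apply measurable_of_tendsto_metrizable'
      (f := fun n (ω : Om) => ∑ j ∈ Finset.range n, g j (ω j)) atTop
    · intro n
      exact Finset.measurable_sum _ fun j _ => (hg_meas j).comp (measurable_pi_apply j)
    · rw [tendsto_pi_nhds]
      intro ω
      exact (hsummand ω).hasSum.tendsto_sum_nat
  -- the key claim
  have hkey : ∀ j, lam (Φ ⁻¹' (M j)) = 0 := by
    intro j
    set s : Gc → Om := fun u i => if i = j then u else 0 with hsdef
    have hs_meas : Measurable s := by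
      apply measurable_pi_lambda
      intro i
      by_cases hi : i = j
      · simpa [hsdef, hi] using measurable_id'
      · simpa [hsdef, hi] using measurable_const
    set τ : Om × Gc → Om := fun p => p.1 + s p.2 with hτdef
    have hτ_meas : Measurable τ :=
      measurable_fst.add (hs_meas.comp measurable_snd)
    have hA : MeasurableSet (Φ ⁻¹' (M j)) := hΦ_meas (hM j)
    have hτA : MeasurableSet (τ ⁻¹' (Φ ⁻¹' (M j))) := hτ_meas hA
    -- step (i)
    have hstep1 : (lam.prod (volume : Measure Gc)) (τ ⁻¹' (Φ ⁻¹' (M j)))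
        = lam (Φ ⁻¹' (M j)) := by
      rw [Measure.prod_apply_symm hτA]
      have : ∀ u : Gc, ((fun ω : Om => (ω, u)) ⁻¹' (τ ⁻¹' (Φ ⁻¹' (M j))))
          = (fun ω : Om => s u + ω) ⁻¹' (Φ ⁻¹' (M j)) := by
        intro u
        ext ω
        simp only [mem_preimage, hτdef]
        rw [add_comm]
      simp only [this, measure_preimage_add]
      simp
    -- step (ii)
    have hstep2 : (lam.prod (volume : Measure Gc)) (τ ⁻¹' (Φ ⁻¹' (M j))) = 0 := by
      rw [Measure.prod_apply hτA]
      have hzero : ∀ ω : Om, (volume : Measure Gc)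
          (Prod.mk ω ⁻¹' (τ ⁻¹' (Φ ⁻¹' (M j)))) = 0 := by
        intro ω
        set c : ℝ := ∑' i, ite (i = j) 0 (g i (ω i)) with hcdef
        set Mc : Set ℝ := (fun y => y + c) ⁻¹' (M j) with hMcdef
        have hMc_meas : MeasurableSet Mc := (measurable_add_const c) (hM j)
        have hΦval : ∀ u : Gc, Φ (ω + s u) = g j (ω j + u) + c := by
          intro u
          have hcoord : ∀ i, (ω + s u) i = if i = j then ω j + u else ω i := by
            intro i
            by_cases hi : i = j
            · simp [hsdef, hi]
            · simp [hsdef, hi]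
          have hsummand2 : Summable fun i => g i ((ω + s u) i) := hsummand _
          rw [hΦdef]
          simp only []
          rw [Summable.tsum_eq_add_tsum_ite hsummand2 j]
          congr 1
          · rw [hcoord j, if_pos rfl]
          · rw [hcdef]
            apply tsum_congr
            intro i
            by_cases hi : i = j
            · simp [hi]
            · simp only [hi, if_neg hi]
              rw [hcoord i, if_neg hi]
        have hset : (Prod.mk ω ⁻¹' (τ ⁻¹' (Φ ⁻¹' (M j))))
            = (fun u : Gc => ω j + u) ⁻¹' ((g j) ⁻¹' Mc) := by
          ext u
          simp only [mem_preimage, hτdef]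
          rw [hΦval u]
          simp [hMcdef, mem_preimage]
        rw [hset, measure_preimage_add, ← Measure.map_apply (hg_meas j) hMc_meas, hg_map j]
        rw [Measure.restrict_apply hMc_meas]
        exact measure_mono_null inter_subset_left (transinv_null (hinv j) (hM j) (hM0 j) c)
      simp only [hzero, lintegral_zero]
    rw [← hstep1, hstep2]
  have hunion : lam (⋃ j, Φ ⁻¹' (M j)) = 0 := measure_iUnion_null hkey
  have hne : ((⋃ j, Φ ⁻¹' (M j))ᶜ : Set Om).Nonempty := by
    by_contra hc
    rw [not_nonempty_iff_eq_empty, compl_empty_iff] at hc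
    rw [hc] at hunion
    simp at hunion
  obtain ⟨ω, hω⟩ := hne
  refine ⟨Φ ω, ⟨fun j => g j (ω j), fun j => hg_memK j (ω j), (hsummand ω).hasSum⟩, ?_⟩
  intro j hj
  exact hω (mem_iUnion.mpr ⟨j, hj⟩)

end Escape
theorem stmt5 (μ : ℕ → Measure ℝ) (hinv : ∀ j, IsTransInv (μ j))
    (a : ℕ → ℝ) (ha : ∀ j, 0 ≤ a j) (hsum : Summable a)
    (K : ℕ → Set ℝ) (hKc : ∀ j, IsCompact (K j)) (hKsub : ∀ j, K j ⊆ Icc 0 (a j))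
    (hKμ : ∀ j, μ j (K j) = 1)
    (B : Set ℝ) (hB : MeasurableSet B) (T : Set ℝ) (hT : ¬ T.Countable)
    (hdisj : T.PairwiseDisjoint fun t => (fun x => x + t) '' sumSet K)
    (hsub : ∀ t ∈ T, (fun x => x + t) '' sumSet K ⊆ B) :
    ¬ ∃ Bj : ℕ → Set ℝ, (∀ j, MeasurableSet (Bj j)) ∧ B = ⋃ j, Bj j ∧
      ∀ j, SigmaFiniteOnSet (μ j) (Bj j) := by
  rintro ⟨Bj, hBj_meas, hB_eq, hBj_sig⟩
  choose C hC_eq hC_fin using hBj_sig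
  set D : ℕ → ℕ → Set ℝ := fun j n => toMeasurable (μ j) (C j n) with hDdef
  have hD_meas : ∀ j n, MeasurableSet (D j n) := fun j n => measurableSet_toMeasurable _ _
  have hD_fin : ∀ j n, μ j (D j n) < ⊤ := fun j n => by
    rw [hDdef]
    simp only []
    rw [measure_toMeasurable]
    exact hC_fin j n
  have hCD : ∀ j n, C j n ⊆ D j n := fun j n => subset_toMeasurable _ _
  have hKcomp : IsCompact (sumSet K) := isCompact_sumSet a hsum K hKc hKsub
  have hKt_meas : ∀ t : ℝ, MeasurableSet ((fun x => x + t) '' sumSet K) := fun t =>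
    (hKcomp.image (continuous_id.add continuous_const)).isClosed.measurableSet
  have hbad : ∀ j n, Set.Countable
      {t : ℝ | t ∈ T ∧ 0 < μ j (((fun x => x + t) '' sumSet K) ∩ D j n)} := by
    intro j n
    have hcnt := Measure.countable_meas_pos_of_disjoint_of_meas_iUnion_ne_top (μ j)
      (As := fun t : T => ((fun x => x + (t : ℝ)) '' sumSet K) ∩ D j n)
      (fun t => (hKt_meas t).inter (hD_meas j n))
      (fun t1 t2 hne => ((hdisj t1.2 t2.2 (fun h => hne (Subtype.ext h))).mono
        inter_subset_left inter_subset_left))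
      (by
        refine ne_top_of_le_ne_top (hD_fin j n).ne (measure_mono ?_)
        exact iUnion_subset fun t => inter_subset_right)
    have himg : {t : ℝ | t ∈ T ∧ 0 < μ j (((fun x => x + t) '' sumSet K) ∩ D j n)}
        = Subtype.val '' {t : T | 0 < μ j (((fun x => x + (t : ℝ)) '' sumSet K) ∩ D j n)} := by
      ext t
      constructor
      · rintro ⟨htT, hpos⟩
        exact ⟨⟨t, htT⟩, hpos, rfl⟩
      · rintro ⟨⟨t', ht'⟩, hpos, rfl⟩
        exact ⟨ht', hpos⟩
    rw [himg]
    exact hcnt.image _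
  obtain ⟨t, htT, htgood⟩ :
      ∃ t ∈ T, ∀ j n, μ j (((fun x => x + t) '' sumSet K) ∩ D j n) = 0 := by
    by_contra hc
    push_neg at hc
    have hsubT : T ⊆ ⋃ j, ⋃ n,
        {t : ℝ | t ∈ T ∧ 0 < μ j (((fun x => x + t) '' sumSet K) ∩ D j n)} := by
      intro t ht
      obtain ⟨j, n, hjn⟩ := hc t ht
      exact mem_iUnion.mpr ⟨j, mem_iUnion.mpr ⟨n, ht, pos_iff_ne_zero.mpr hjn⟩⟩
    exact hT (((Set.countable_iUnion fun j =>
      Set.countable_iUnion fun n => hbad j n).mono hsubT))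
  set N : ℕ → Set ℝ := fun j => ((fun x => x + t) '' sumSet K) ∩ ⋃ n, D j n with hNdef
  have hN_meas : ∀ j, MeasurableSet (N j) := fun j =>
    (hKt_meas t).inter (MeasurableSet.iUnion (hD_meas j))
  have hN_null : ∀ j, μ j (N j) = 0 := by
    intro j
    rw [hNdef]
    simp only []
    rw [inter_iUnion]
    exact measure_iUnion_null fun n => htgood j n
  set M : ℕ → Set ℝ := fun j => (fun y => y + t) ⁻¹' (N j) with hMdef
  have hM_meas : ∀ j, MeasurableSet (M j) := fun j => (measurable_add_const t) (hN_meas j)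
  have hM_null : ∀ j, μ j (M j) = 0 := fun j =>
    transinv_null (hinv j) (hN_meas j) (hN_null j) t
  obtain ⟨x, hx_mem, hx_avoid⟩ := core_escape μ hinv a hsum K hKc hKsub hKμ M hM_meas hM_null
  have hxB : x + t ∈ B := hsub t htT ⟨x, hx_mem, rfl⟩
  rw [hB_eq] at hxB
  obtain ⟨j, hj⟩ := mem_iUnion.mp hxB
  have hxD : x + t ∈ ⋃ n, D j n := by
    rw [hC_eq j] at hj
    obtain ⟨n, hn⟩ := mem_iUnion.mp hj
    exact mem_iUnion.mpr ⟨n, hCD j n hn⟩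
  exact hx_avoid j (show x ∈ M j from ⟨⟨x, hx_mem, rfl⟩, hxD⟩)
end

section
/- Let P be a Polish group and let G be a subgroup of P which is a Borel subset of P, endowed with the subspace topology. If G is not σ-compact (not a countable union of compact sets), then G cannot be written as a finite union of measured Borel subsets of G. -/
open MeasureTheory Set

/-- A Borel measure on a group is translation invariant if it is invariant under
all left and right translations of Borel sets. -/
def IsTransInvGrp {G : Type*} [Group G] [MeasurableSpace G] (μ : Measure G) : Prop :=
  ∀ (g : G) (E : Set G), MeasurableSet E →
    μ ((fun x => g * x) '' E) = μ E ∧ μ ((fun x => x * g) '' E) = μ E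

/-- A Borel set `A` in a group is measured if some translation invariant Borel measure
assigns positive measure to `A` and `A` is a countable union of sets of finite measure. -/
def IsMeasuredGrp {G : Type*} [Group G] [MeasurableSpace G] (A : Set G) : Prop :=
  MeasurableSet A ∧ ∃ μ : Measure G, IsTransInvGrp μ ∧ 0 < μ A ∧ SigmaFiniteOnSet μ A

namespace Stmt8Aux

open scoped Pointwise ENNReal Topology
open Filter

/-! ### Ulam tightness: a finite Borel measure on a Polish space is tight. -/

theorem exists_compact_compl_le {α : Type*} [TopologicalSpace α] [PolishSpace α]
    [MeasurableSpace α] [BorelSpace α] (μ : Measure α) [IsFiniteMeasure μ]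
    {ε : ℝ≥0∞} (hε : ε ≠ 0) : ∃ K : Set α, IsCompact K ∧ μ Kᶜ ≤ ε := by
  rcases isEmpty_or_nonempty α with hα | hα
  · refine ⟨∅, isCompact_empty, ?_⟩
    have : ((∅ : Set α)ᶜ : Set α) = ∅ := by
      rw [compl_empty, Set.univ_eq_empty_iff]
      exact hα
    rw [this, measure_empty]
    exact zero_le
  letI := TopologicalSpace.upgradeIsCompletelyMetrizable α
  obtain ⟨u, hu⟩ := TopologicalSpace.exists_dense_seq α
  obtain ⟨δ, hδpos, hδsum⟩ := ENNReal.exists_pos_sum_of_countable' hε ℕ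
  set E : ℕ → ℕ → Set α :=
    fun n m => ⋃ i ∈ Finset.range m, Metric.closedBall (u i) ((n + 1 : ℝ)⁻¹) with hE
  have hEclosed : ∀ n m, IsClosed (E n m) := fun n m =>
    isClosed_biUnion_finset fun i _ => Metric.isClosed_closedBall
  have hEmono : ∀ n, Monotone fun m => E n m := by
    intro n a b hab x hx
    obtain ⟨i, hi, hxi⟩ := by simpa [hE, mem_iUnion] using hx
    exact mem_iUnion.2 ⟨i, mem_iUnion.2 ⟨Finset.mem_range.2 (lt_of_lt_of_le hi hab), hxi⟩⟩
  have hEunion : ∀ n, (⋃ m, E n m) = univ := by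
    intro n
    apply eq_univ_of_forall
    intro x
    have hr : (0 : ℝ) < ((n : ℝ) + 1)⁻¹ := by positivity
    obtain ⟨i, hi⟩ := Metric.denseRange_iff.1 hu x _ hr
    exact mem_iUnion.2 ⟨i + 1, mem_biUnion (Finset.mem_range.2 (Nat.lt_succ_self i))
      (Metric.mem_closedBall.2 hi.le)⟩
  have main : ∀ n : ℕ, ∃ m : ℕ, μ (E n m)ᶜ < δ n := by
    intro n
    have htend : Tendsto (fun m => μ (E n m)ᶜ) atTop (𝓝 (μ (⋂ m, (E n m)ᶜ))) := by
      have := tendsto_measure_iInter_atTop (μ := μ) (s := fun m => (E n m)ᶜ)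
        (fun m => ((hEclosed n m).isOpen_compl.measurableSet).nullMeasurableSet)
        (fun a b hab => compl_subset_compl.2 (hEmono n hab))
        ⟨0, measure_ne_top μ _⟩
      exact this
    have h0 : (⋂ m, (E n m)ᶜ) = ∅ := by
      rw [← compl_iUnion, hEunion n, compl_univ]
    rw [h0, measure_empty] at htend
    exact ((tendsto_order.1 htend).2 (δ n) (hδpos n)).exists
  choose m hm using main
  set K : Set α := ⋂ n, E n (m n) with hK
  have hKclosed : IsClosed K := isClosed_iInter fun n => hEclosed n (m n)
  have hKtb : TotallyBounded K := by
    rw [Metric.totallyBounded_iff]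
    intro ε' hε'
    obtain ⟨n, hn0⟩ := exists_nat_one_div_lt hε'
    have hn : ((n : ℝ) + 1)⁻¹ < ε' := by
      rw [inv_eq_one_div]
      exact_mod_cast hn0
    refine ⟨u '' (Finset.range (m n)), (Finset.range (m n)).finite_toSet.image u, ?_⟩
    intro x hx
    have hx' : x ∈ E n (m n) := mem_iInter.1 hx n
    obtain ⟨i, hi, hxi⟩ := by simpa [hE, mem_iUnion] using hx'
    refine mem_biUnion (mem_image_of_mem u (Finset.mem_coe.2 (Finset.mem_range.2 hi))) ?_
    exact Metric.closedBall_subset_ball hn hxi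
  refine ⟨K, hKtb.isCompact_of_isClosed hKclosed, ?_⟩
  have : Kᶜ = ⋃ n, (E n (m n))ᶜ := by rw [hK, compl_iInter]
  rw [this]
  refine le_trans (measure_iUnion_le _) (le_trans (ENNReal.tsum_le_tsum fun n => (hm n).le)
    hδsum.le)

/-- Tightness on measurable sets. -/
theorem exists_compact_diff_le {α : Type*} [TopologicalSpace α] [PolishSpace α]
    [MeasurableSpace α] [BorelSpace α] (μ : Measure α) [IsFiniteMeasure μ]
    {A : Set α} (hA : MeasurableSet A) {ε : ℝ≥0∞} (hε : ε ≠ 0) :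
    ∃ K, K ⊆ A ∧ IsCompact K ∧ μ (A \ K) ≤ ε := by
  have hε2 : ε / 2 ≠ 0 := (ENNReal.half_pos hε).ne'
  obtain ⟨F, hFA, hFclosed, hF⟩ := hA.exists_isClosed_diff_lt (measure_ne_top μ A) hε2
  obtain ⟨K0, hK0compact, hK0⟩ := exists_compact_compl_le μ hε2
  refine ⟨F ∩ K0, inter_subset_left.trans hFA, hK0compact.inter_left hFclosed, ?_⟩
  have hsub : A \ (F ∩ K0) ⊆ (A \ F) ∪ K0ᶜ := by
    intro x hx
    rcases hx with ⟨hxA, hxn⟩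
    by_cases hxF : x ∈ F
    · by_cases hxK : x ∈ K0
      · exact absurd ⟨hxF, hxK⟩ hxn
      · exact Or.inr hxK
    · exact Or.inl ⟨hxA, hxF⟩
  calc μ (A \ (F ∩ K0)) ≤ μ ((A \ F) ∪ K0ᶜ) := measure_mono hsub
    _ ≤ μ (A \ F) + μ K0ᶜ := measure_union_le _ _
    _ ≤ ε / 2 + ε / 2 := add_le_add hF.le hK0
    _ = ε := ENNReal.add_halves ε

/-! ### Translation invariance -/

theorem _root_.IsTransInvGrp.measure_preimage_zero {X : Type*} [Group X] [MeasurableSpace X]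
    [MeasurableMul X] {μ : Measure X} (h : IsTransInvGrp μ) {T : Set X}
    (hT : MeasurableSet T) (hT0 : μ T = 0) (a b : X) : μ {u | a * u * b ∈ T} = 0 := by
  have h1 : {w : X | w * b ∈ T} = (fun v => v * b⁻¹) '' T := by
    ext x
    constructor
    · intro hx
      exact ⟨x * b, hx, by simp⟩
    · rintro ⟨t, ht, rfl⟩
      simpa using ht
  have h1meas : MeasurableSet {w : X | w * b ∈ T} := measurable_mul_const b hT
  have e1 : μ {w : X | w * b ∈ T} = μ T := by rw [h1]; exact (h b⁻¹ T hT).2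
  have h2 : {u : X | a * u * b ∈ T} = (fun v => a⁻¹ * v) '' {w : X | w * b ∈ T} := by
    ext x
    constructor
    · intro hx
      exact ⟨a * x, hx, by simp⟩
    · rintro ⟨t, ht, rfl⟩
      simpa [mul_assoc] using ht
  have e2 : μ {u : X | a * u * b ∈ T} = μ {w : X | w * b ∈ T} := by
    rw [h2]; exact (h a⁻¹ _ h1meas).1
  rw [e2, e1, hT0]

/-! ### Convolution fold of a finite family of measures -/

variable {X : Type*} [Group X] [MeasurableSpace X] [MeasurableMul₂ X]

/-- Binary "convolution" of measures. -/
noncomputable def mc (μ ν : Measure X) : Measure X :=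
  Measure.map (fun p : X × X => p.1 * p.2) (μ.prod ν)

theorem mc_apply (μ ν : Measure X) [SFinite ν] {S : Set X} (hS : MeasurableSet S) :
    mc μ ν S = ∫⁻ u, ν {v | u * v ∈ S} ∂μ := by
  rw [mc, Measure.map_apply measurable_mul hS, Measure.prod_apply (measurable_mul hS)]
  rfl

theorem mc_apply_symm (μ ν : Measure X) [SFinite μ] [SFinite ν] {S : Set X}
    (hS : MeasurableSet S) : mc μ ν S = ∫⁻ v, μ {u | u * v ∈ S} ∂ν := by
  rw [mc, Measure.map_apply measurable_mul hS, Measure.prod_apply_symm (measurable_mul hS)]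
  rfl

theorem mc_univ (μ ν : Measure X) [SFinite ν] : mc μ ν univ = μ univ * ν univ := by
  rw [mc, Measure.map_apply measurable_mul MeasurableSet.univ, preimage_univ,
    ← univ_prod_univ, Measure.prod_prod]

theorem mc_finite (μ ν : Measure X) [IsFiniteMeasure μ] [IsFiniteMeasure ν] :
    IsFiniteMeasure (mc μ ν) := by
  constructor
  rw [mc_univ]
  exact ENNReal.mul_lt_top (measure_lt_top μ _) (measure_lt_top ν _)

/-- Iterated convolution of a list of measures against a Dirac mass at `x₀`. -/
noncomputable def fold (x₀ : X) : List (Measure X × Set X) → Measure X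
  | [] => Measure.dirac x₀
  | p :: l => mc p.1 (fold x₀ l)

/-- The set carrying the iterated convolution. -/
def carrier (x₀ : X) : List (Measure X × Set X) → Set X
  | [] => {x₀}
  | p :: l => p.2 * carrier x₀ l

theorem fold_finite (x₀ : X) :
    ∀ l : List (Measure X × Set X), (∀ p ∈ l, IsFiniteMeasure p.1) →
      IsFiniteMeasure (fold x₀ l)
  | [], _ => by rw [fold]; infer_instance
  | p :: l, h => by
      haveI := fold_finite x₀ l (fun q hq => h q (List.mem_cons_of_mem _ hq))
      haveI := h p (List.mem_cons_self)
      rw [fold]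
      exact mc_finite _ _

theorem fold_univ (x₀ : X) :
    ∀ l : List (Measure X × Set X), (∀ p ∈ l, IsFiniteMeasure p.1) →
      fold x₀ l univ = (l.map (fun p => p.1 univ)).prod
  | [], _ => by simp [fold]
  | p :: l, h => by
      haveI := fold_finite x₀ l (fun q hq => h q (List.mem_cons_of_mem _ hq))
      haveI := h p (List.mem_cons_self)
      rw [fold, mc_univ, fold_univ x₀ l (fun q hq => h q (List.mem_cons_of_mem _ hq))]
      simp

theorem fold_null (x₀ : X) {T : Set X} (hT : MeasurableSet T) :
    ∀ l : List (Measure X × Set X), (∀ p ∈ l, IsFiniteMeasure p.1) →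
      ∀ q ∈ l, (∀ a b : X, q.1 {u | a * u * b ∈ T} = 0) →
      ∀ a : X, fold x₀ l {y | a * y ∈ T} = 0
  | [], _, q, hq, _, _ => absurd hq List.not_mem_nil
  | p :: l, hfin, q, hq, hq0, a => by
      haveI := fold_finite x₀ l (fun r hr => hfin r (List.mem_cons_of_mem _ hr))
      haveI := hfin p (List.mem_cons_self)
      have hSa : MeasurableSet {y : X | a * y ∈ T} := measurable_const_mul a hT
      rcases List.mem_cons.1 hq with rfl | hq'
      · rw [fold, mc_apply_symm _ _ hSa]
        have hz : ∀ v : X, q.1 {u | u * v ∈ {y : X | a * y ∈ T}} = 0 := by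
          intro v
          have : {u : X | u * v ∈ {y : X | a * y ∈ T}} = {u : X | a * u * v ∈ T} := by
            ext u; simp [mul_assoc]
          rw [this]
          exact hq0 a v
        simp only [hz, lintegral_zero]
      · rw [fold, mc_apply _ _ hSa]
        have hz : ∀ u : X, fold x₀ l {v | u * v ∈ {y : X | a * y ∈ T}} = 0 := by
          intro u
          have : {v : X | u * v ∈ {y : X | a * y ∈ T}} = {v : X | (a * u) * v ∈ T} := by
            ext v; simp [mul_assoc]
          rw [this]
          exact fold_null x₀ hT l (fun r hr => hfin r (List.mem_cons_of_mem _ hr)) q hq' hq0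
            (a * u)
        simp only [hz, lintegral_zero]

theorem fold_carrier (x₀ : X) :
    ∀ l : List (Measure X × Set X), (∀ p ∈ l, IsFiniteMeasure p.1) →
      (∀ p ∈ l, MeasurableSet p.2 ∧ p.1 p.2ᶜ = 0) →
      ∀ S : Set X, MeasurableSet S → Disjoint S (carrier x₀ l) → fold x₀ l S = 0
  | [], _, _, S, hS, hdisj => by
      rw [fold, Measure.dirac_apply' _ hS]
      have : x₀ ∉ S := fun hx => (disjoint_left.1 hdisj hx) rfl
      simp [this]
  | p :: l, hfin, hsupp, S, hS, hdisj => by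
      haveI := fold_finite x₀ l (fun r hr => hfin r (List.mem_cons_of_mem _ hr))
      haveI := hfin p (List.mem_cons_self)
      rw [fold, mc_apply _ _ hS]
      have hbound : ∀ u : X,
          fold x₀ l {v | u * v ∈ S} ≤ (p.2ᶜ).indicator (fun _ => (⊤ : ℝ≥0∞)) u := by
        intro u
        by_cases hu : u ∈ p.2
        · have hdisj' : Disjoint {v : X | u * v ∈ S} (carrier x₀ l) := by
            rw [disjoint_left]
            intro v hv hvc
            exact (disjoint_left.1 hdisj hv) (Set.mul_mem_mul hu hvc)
          have hmeas' : MeasurableSet {v : X | u * v ∈ S} := measurable_const_mul u hS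
          rw [fold_carrier x₀ l (fun r hr => hfin r (List.mem_cons_of_mem _ hr))
            (fun r hr => hsupp r (List.mem_cons_of_mem _ hr)) _ hmeas' hdisj']
          simp
        · have : u ∈ p.2ᶜ := hu
          simp [indicator_of_mem this]
      refine le_antisymm ?_ (zero_le)
      calc ∫⁻ u, fold x₀ l {v | u * v ∈ S} ∂p.1
          ≤ ∫⁻ u, (p.2ᶜ).indicator (fun _ => (⊤ : ℝ≥0∞)) u ∂p.1 := lintegral_mono hbound
        _ = ⊤ * p.1 p.2ᶜ := by
            rw [lintegral_indicator (hsupp p (List.mem_cons_self)).1.compl, setLIntegral_const]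
        _ = 0 := by rw [(hsupp p (List.mem_cons_self)).2, mul_zero]

theorem carrier_eq (x₀ : X) :
    ∀ l : List (Measure X × Set X), carrier x₀ l = (l.map Prod.snd).prod * {x₀}
  | [] => by simp [carrier]
  | p :: l => by
      rw [carrier, carrier_eq x₀ l, List.map_cons, List.prod_cons, mul_assoc]

theorem isCompact_listProd {Y : Type*} [TopologicalSpace Y] [Monoid Y] [ContinuousMul Y] :
    ∀ L : List (Set Y), (∀ s ∈ L, IsCompact s) → IsCompact L.prod
  | [], _ => by
      rw [List.prod_nil]
      exact isCompact_singleton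
  | s :: L, h => by
      rw [List.prod_cons]
      exact (h s (List.mem_cons_self)).mul
        (isCompact_listProd L fun t ht => h t (List.mem_cons_of_mem _ ht))

end Stmt8Aux

open Stmt8Aux
open scoped Pointwise ENNReal

theorem stmt8 {P : Type*} [Group P] [TopologicalSpace P] [IsTopologicalGroup P]
    [PolishSpace P] [MeasurableSpace P] [BorelSpace P]
    (G : Subgroup P) (hGborel : MeasurableSet (G : Set P))
    (hGnotσc : ¬ ∃ K : ℕ → Set P, (∀ m, IsCompact (K m)) ∧ (G : Set P) = ⋃ m, K m) :
    ¬ ∃ (N : ℕ) (A : Fin N → Set ↥G),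
        (⋃ j, A j) = Set.univ ∧ ∀ j, IsMeasuredGrp (A j) := by
  classical
  rintro ⟨N, A, hcover, hmeasured⟩
  haveI : BorelSpace ↥G := Subtype.borelSpace (G : Set P)
  haveI : T2Space P := inferInstance
  haveI : SecondCountableTopology ↥G :=
    TopologicalSpace.Subtype.secondCountableTopology (G : Set P)
  haveI : MeasurableMul₂ ↥G := ContinuousMul.measurableMul₂
  have hval : Measurable ((↑) : ↥G → P) := measurable_subtype_coe
  have hemb : MeasurableEmbedding ((↑) : ↥G → P) := MeasurableEmbedding.subtype_coe hGborel
  -- unpack the measured structure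
  have hAmeas : ∀ j, MeasurableSet (A j) := fun j => (hmeasured j).1
  choose μ hinv hpos hσ using fun j => (hmeasured j).2
  choose C hCeq hCfin using hσ
  choose D hDsub hDmeas hDeq using fun (j : Fin N) (n : ℕ) =>
    exists_measurable_superset (μ j) (C j n)
  have hDfin : ∀ j n, μ j (D j n) < ⊤ := fun j n => by rw [hDeq j n]; exact hCfin j n
  -- tightness on the subgroup
  have key : ∀ (j : Fin N) (B : Set ↥G), MeasurableSet B → μ j B ≠ ⊤ →
      ∀ ε : ℝ≥0∞, ε ≠ 0 → ∃ K, K ⊆ B ∧ IsCompact K ∧ μ j (B \ K) ≤ ε := by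
    intro j B hB hBfin ε hε
    haveI : IsFiniteMeasure ((μ j).restrict B) :=
      ⟨by rw [Measure.restrict_apply_univ]; exact hBfin.lt_top⟩
    set ρ : Measure P := Measure.map ((↑) : ↥G → P) ((μ j).restrict B) with hρ
    haveI : IsFiniteMeasure ρ := by
      constructor
      rw [hρ, Measure.map_apply hval MeasurableSet.univ]
      exact measure_lt_top _ _
    have hT : MeasurableSet (((↑) : ↥G → P) '' B) := hemb.measurableSet_image.2 hB
    obtain ⟨K, hKT, hKcomp, hKle⟩ := exists_compact_diff_le ρ hT hε
    have hKrange : K ⊆ Set.range ((↑) : ↥G → P) :=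
      hKT.trans ((Set.image_subset_range _ _))
    have himg : ((↑) : ↥G → P) '' (((↑) : ↥G → P) ⁻¹' K) = K :=
      Set.image_preimage_eq_of_subset hKrange
    refine ⟨((↑) : ↥G → P) ⁻¹' K, ?_, ?_, ?_⟩
    · intro x hx
      rcases hKT hx with ⟨y, hyB, hyx⟩
      rwa [← Subtype.val_injective hyx]
    · rw [Topology.IsEmbedding.subtypeVal.isCompact_iff, himg]
      exact hKcomp
    · have hKmeas : MeasurableSet K := hKcomp.isClosed.measurableSet
      have hcalc : ρ (((↑) : ↥G → P) '' B \ K) = μ j (B \ ((↑) : ↥G → P) ⁻¹' K) := by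
        rw [hρ, Measure.map_apply hval (hT.diff hKmeas), Measure.restrict_apply
          (hval (hT.diff hKmeas))]
        congr 1
        ext x
        simp only [Set.mem_inter_iff, Set.mem_preimage, Set.mem_diff]
        constructor
        · rintro ⟨⟨-, hxK⟩, hxB⟩
          exact ⟨hxB, hxK⟩
        · rintro ⟨hxB, hxK⟩
          exact ⟨⟨Set.mem_image_of_mem _ hxB, hxK⟩, hxB⟩
      rw [← hcalc]
      exact hKle
  -- inner approximation of each A j by countably many compact sets
  have approx : ∀ j : Fin N, ∃ κ : ℕ → Set ↥G, (∀ k, IsCompact (κ k)) ∧ (∀ k, κ k ⊆ A j) ∧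
      (∀ k, μ j (κ k) < ⊤) ∧ μ j (A j \ ⋃ k, κ k) = 0 := by
    intro j
    have hBmeas : ∀ n, MeasurableSet (A j ∩ D j n) := fun n => (hAmeas j).inter (hDmeas j n)
    have hBfin : ∀ n, μ j (A j ∩ D j n) ≠ ⊤ :=
      fun n => (lt_of_le_of_lt (measure_mono Set.inter_subset_right) (hDfin j n)).ne
    have step : ∀ n k : ℕ, ∃ K, K ⊆ A j ∩ D j n ∧ IsCompact K ∧
        μ j ((A j ∩ D j n) \ K) ≤ ((k : ℝ≥0∞) + 1)⁻¹ := by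
      intro n k
      refine key j _ (hBmeas n) (hBfin n) _ ?_
      simp [ENNReal.inv_ne_zero]
    choose Kf hKsub hKcomp hKle using step
    set U : Set ↥G := ⋃ m : ℕ, Kf (Nat.unpair m).1 (Nat.unpair m).2 with hU
    have hcov : A j ⊆ ⋃ n, (A j ∩ D j n) := by
      intro x hx
      have : x ∈ ⋃ n, C j n := by rw [← hCeq j]; exact hx
      rcases Set.mem_iUnion.1 this with ⟨n, hn⟩
      exact Set.mem_iUnion.2 ⟨n, hx, hDsub j n hn⟩
    have hpiece : ∀ n, μ j ((A j ∩ D j n) \ U) = 0 := by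
      intro n
      have hle : ∀ k : ℕ, μ j ((A j ∩ D j n) \ U) ≤ ((k : ℝ≥0∞) + 1)⁻¹ := by
        intro k
        refine le_trans (measure_mono (Set.diff_subset_diff_right ?_)) (hKle n k)
        intro x hx
        exact Set.mem_iUnion.2 ⟨Nat.pair n k, by simpa [Nat.unpair_pair] using hx⟩
      by_contra h0
      obtain ⟨k, hk⟩ := ENNReal.exists_inv_nat_lt h0
      have h2 : ((k : ℝ≥0∞) + 1)⁻¹ ≤ ((k : ℝ≥0∞))⁻¹ := by
        gcongr
        exact le_self_add
      exact absurd ((hle k).trans h2) (not_le.2 hk)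
    have hsub2 : A j \ U ⊆ ⋃ n, ((A j ∩ D j n) \ U) := by
      intro x hx
      rcases Set.mem_iUnion.1 (hcov hx.1) with ⟨n, hn⟩
      exact Set.mem_iUnion.2 ⟨n, hn, hx.2⟩
    have hfinal : μ j (A j \ U) = 0 := by
      refine le_antisymm (le_trans (measure_mono hsub2) ?_) (zero_le)
      refine le_trans (measure_iUnion_le _) ?_
      simp [hpiece]
    exact ⟨fun m : ℕ => Kf (Nat.unpair m).1 (Nat.unpair m).2, fun m => hKcomp _ _,
      fun m => (hKsub _ _).trans Set.inter_subset_left, fun m =>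
        lt_of_le_of_lt (measure_mono ((hKsub _ _).trans Set.inter_subset_right)) (hDfin j _),
      hfinal⟩
  choose κ hκcomp hκsub hκfin hκnull using approx
  -- pick a compact set of positive finite measure for each j
  have hpos' : ∀ j, ∃ m, μ j (κ j m) ≠ 0 := by
    intro j
    by_contra h0
    push_neg at h0
    have hU0 : μ j (⋃ m, κ j m) = 0 := measure_iUnion_null h0
    have : μ j (A j) ≤ μ j (A j \ ⋃ m, κ j m) + μ j (⋃ m, κ j m) := by
      refine le_trans (measure_mono ?_) (measure_union_le _ _)
      intro x hx
      by_cases hxU : x ∈ ⋃ m, κ j m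
      · exact Or.inr hxU
      · exact Or.inl ⟨hx, hxU⟩
    rw [hκnull j, hU0, add_zero] at this
    exact absurd (le_antisymm this (zero_le)) (hpos j).ne'
  choose idx hidx using hpos'
  set Kc : Fin N → Set ↥G := fun j => κ j (idx j) with hKc
  have hKccomp : ∀ j, IsCompact (Kc j) := fun j => hκcomp j _
  have hKcfin : ∀ j, μ j (Kc j) < ⊤ := fun j => hκfin j _
  have hKcpos : ∀ j, μ j (Kc j) ≠ 0 := fun j => hidx j
  -- the list of restricted measures
  set l : List (Measure ↥G × Set ↥G) :=
    List.ofFn (fun i : Fin N => ((μ i).restrict (Kc i), Kc i)) with hl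
  have hlfin : ∀ p ∈ l, IsFiniteMeasure p.1 := by
    intro p hp
    rcases (List.mem_ofFn).1 hp with ⟨i, rfl⟩
    exact ⟨by rw [Measure.restrict_apply_univ]; exact hKcfin i⟩
  have hlsupp : ∀ p ∈ l, MeasurableSet p.2 ∧ p.1 p.2ᶜ = 0 := by
    intro p hp
    rcases (List.mem_ofFn).1 hp with ⟨i, rfl⟩
    refine ⟨(hKccomp i).isClosed.measurableSet, ?_⟩
    rw [Measure.restrict_apply (hKccomp i).isClosed.measurableSet.compl,
      Set.compl_inter_self, measure_empty]
  -- the product of the compact sets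
  set Qs : Set ↥G := (l.map Prod.snd).prod with hQs
  have hQcomp : IsCompact Qs := by
    refine isCompact_listProd _ ?_
    intro s hs
    rcases List.mem_map.1 hs with ⟨p, hp, rfl⟩
    rcases (List.mem_ofFn).1 hp with ⟨i, rfl⟩
    exact hKccomp i
  -- choice of the base point x₀
  have hx₀ : ∃ x₀ : ↥G, ∀ (i : Fin N) (k : ℕ), x₀ ∉ Qs⁻¹ * κ i k := by
    by_contra hbad
    push_neg at hbad
    obtain ⟨f, hf⟩ := exists_surjective_nat (Option (Fin N × ℕ))
    refine hGnotσc ⟨fun m => (f m).elim ∅ (fun q => ((↑) : ↥G → P) '' (Qs⁻¹ * κ q.1 q.2)),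
      ?_, ?_⟩
    · intro m
      show IsCompact ((f m).elim ∅ fun q => Subtype.val '' (Qs⁻¹ * κ q.1 q.2))
      cases hfm : f m with
      | none => exact isCompact_empty
      | some q => exact ((hQcomp.inv.mul (hκcomp q.1 q.2)).image continuous_subtype_val)
    · ext x
      constructor
      · intro hxG
        obtain ⟨i, k, hik⟩ := hbad ⟨x, hxG⟩
        obtain ⟨m, hm⟩ := hf (some (i, k))
        refine Set.mem_iUnion.2 ⟨m, ?_⟩
        show x ∈ (f m).elim ∅ fun q => Subtype.val '' (Qs⁻¹ * κ q.1 q.2)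
        rw [hm]
        exact ⟨⟨x, hxG⟩, hik, rfl⟩
      · intro hx
        rcases Set.mem_iUnion.1 hx with ⟨m, hm⟩
        have hm2 : x ∈ (f m).elim ∅ (fun q => Subtype.val '' (Qs⁻¹ * κ q.1 q.2)) := hm
        cases hfm : f m with
        | none =>
            rw [hfm] at hm2
            exact absurd hm2 (Set.notMem_empty x)
        | some q =>
            rw [hfm] at hm2
            have hm' : x ∈ Subtype.val '' (Qs⁻¹ * κ q.1 q.2) := hm2
            rcases hm' with ⟨y, -, rfl⟩
            exact y.2
  obtain ⟨x₀, hx₀⟩ := hx₀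
  -- the convolution measure
  set τ : Measure ↥G := fold x₀ l with hτ
  -- total mass is nonzero
  have hτuniv : τ Set.univ ≠ 0 := by
    rw [hτ, fold_univ x₀ l hlfin, hl, List.map_ofFn]
    refine List.prod_ne_zero ?_
    intro h0
    rcases (List.mem_ofFn).1 h0 with ⟨i, hi⟩
    apply hKcpos i
    simp only [Function.comp] at hi
    rwa [Measure.restrict_apply_univ] at hi
  -- τ vanishes on each null part
  have hτnull : ∀ i : Fin N, τ (A i \ ⋃ k, κ i k) = 0 := by
    intro i
    have hNmeas : MeasurableSet (A i \ ⋃ k, κ i k) :=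
      (hAmeas i).diff (MeasurableSet.iUnion fun k => (hκcomp i k).isClosed.measurableSet)
    have hqmem : ((μ i).restrict (Kc i), Kc i) ∈ l := (List.mem_ofFn).2 ⟨i, rfl⟩
    have hsect : ∀ a b : ↥G,
        ((μ i).restrict (Kc i)) {u | a * u * b ∈ A i \ ⋃ k, κ i k} = 0 := by
      intro a b
      refine le_antisymm (le_trans (Measure.restrict_apply_le _ _) ?_) (zero_le)
      rw [(hinv i).measure_preimage_zero hNmeas (hκnull i) a b]
    have := fold_null x₀ hNmeas l hlfin _ hqmem hsect 1
    have heq : {y : ↥G | 1 * y ∈ A i \ ⋃ k, κ i k} = A i \ ⋃ k, κ i k := by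
      ext y; simp
    rwa [heq] at this
  -- τ vanishes on each compact piece
  have hτκ : ∀ (i : Fin N) (k : ℕ), τ (κ i k) = 0 := by
    intro i k
    refine fold_carrier x₀ l hlfin hlsupp _ (hκcomp i k).isClosed.measurableSet ?_
    rw [carrier_eq, ← hQs]
    rw [Set.disjoint_left]
    rintro y hy hy'
    rcases Set.mem_mul.1 hy' with ⟨q, hq, z, hz, rfl⟩
    have hzx : z = x₀ := hz
    refine hx₀ i k ?_
    have h3 : q⁻¹ * (q * z) ∈ Qs⁻¹ * κ i k :=
      Set.mul_mem_mul (Set.inv_mem_inv.2 hq) hy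
    rw [← hzx]
    simpa using h3
  -- contradiction
  have hcontr : τ Set.univ = 0 := by
    have h1 : τ Set.univ ≤ ∑' i : Fin N, τ (A i) := by
      rw [← hcover]
      exact measure_iUnion_le _
    have h2 : ∀ i : Fin N, τ (A i) = 0 := by
      intro i
      refine le_antisymm ?_ (zero_le)
      have : A i ⊆ (A i \ ⋃ k, κ i k) ∪ ⋃ k, κ i k := by
        intro x hx
        by_cases hxU : x ∈ ⋃ k, κ i k
        · exact Or.inr hxU
        · exact Or.inl ⟨hx, hxU⟩
      refine le_trans (measure_mono this) ?_
      refine le_trans (measure_union_le _ _) ?_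
      rw [hτnull i]
      simp only [zero_add]
      refine le_trans (measure_iUnion_le _) ?_
      simp [hτκ i]
    refine le_antisymm ?_ (zero_le)
    refine le_trans h1 ?_
    simp [h2]
  exact hτuniv hcontr
end

section
/- Let P be a Polish group and G a subgroup of P which is a Borel subset of P, with the subspace topology. Let n ≥ 1 and for j = 1,…,n let μ_j be a translation invariant Borel measure on G and K_j ⊆ G a compact set with 0 < μ_j(K_j) < ∞. Let K = K_1 · K_2 ⋯ K_n = { x_1 x_2 ⋯ x_n : x_j ∈ K_j } be the product set. Suppose B ⊆ G is a Borel set for which there exists an uncountable set T ⊆ G such that the left translates tK (t ∈ T) are pairwise disjoint and all contained in B. Then there are no Borel sets B_1,…,B_n with B = B_1 ∪ ⋯ ∪ B_n such that each B_j is a countable union of sets of finite μ_j-measure. -/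
open MeasureTheory Set

/-- The product set `K_0 · K_1 ⋯ K_{N-1} = { x_0 x_1 ⋯ x_{N-1} : x_j ∈ K j }`. -/
def prodSet {H : Type*} [Monoid H] {N : ℕ} (K : Fin N → Set H) : Set H :=
  {x | ∃ f : Fin N → H, (∀ j, f j ∈ K j) ∧ x = (List.ofFn f).prod}

lemma measurable_listOfFnProd {M : Type*} [Monoid M] [MeasurableSpace M] [MeasurableMul₂ M] :
    ∀ {n : ℕ}, Measurable (fun f : Fin n → M => (List.ofFn f).prod)
  | 0 => by
      simp only [List.ofFn_zero, List.prod_nil]; exact measurable_const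
  | n + 1 => by
      have h : (fun f : Fin (n + 1) → M => (List.ofFn f).prod)
          = fun f => f 0 * (List.ofFn fun i => f i.succ).prod := by
        funext f; rw [List.ofFn_succ, List.prod_cons]
      rw [h]
      exact (measurable_pi_apply 0).mul
        (measurable_listOfFnProd.comp (measurable_pi_lambda _ fun i => measurable_pi_apply _))

lemma cons_insertNth {M : Type*} {n : ℕ} (i : Fin (n + 1)) (x : M) (y : Fin (n + 1) → M) :
    (Fin.succ i).insertNth (α := fun _ => M) x y
      = Fin.cons (y 0) (i.insertNth x fun k => y k.succ) := by
  ext k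
  refine Fin.succAboveCases i.succ ?_ ?_ k
  · simp [Fin.insertNth_apply_same]
  · intro j
    rw [Fin.insertNth_apply_succAbove]
    refine Fin.cases ?_ ?_ j
    · rw [Fin.succ_succAbove_zero]
      simp
    · intro m
      rw [Fin.succ_succAbove_succ]
      simp [Fin.cons_succ, Fin.insertNth_apply_succAbove]

lemma exists_prod_insertNth {M : Type*} [Monoid M] :
    ∀ {n : ℕ} (j : Fin (n + 1)) (y : Fin n → M), ∃ a b : M, ∀ x,
      (List.ofFn (j.insertNth (α := fun _ => M) x y)).prod = a * x * b := by
  intro n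
  induction n with
  | zero =>
      intro j y
      refine ⟨1, 1, fun x => ?_⟩
      have hj : j = 0 := Fin.fin_one_eq_zero j
      subst hj
      simp [Fin.insertNth_zero', List.ofFn_succ]
  | succ n ih =>
      intro j y
      refine Fin.cases ?_ ?_ j
      · refine ⟨1, (List.ofFn y).prod, fun x => ?_⟩
        simp [Fin.insertNth_zero', List.ofFn_succ, mul_assoc]
      · intro i
        obtain ⟨a, b, hab⟩ := ih i fun k => y k.succ
        refine ⟨y 0 * a, b, fun x => ?_⟩
        rw [cons_insertNth, List.ofFn_succ]
        simp only [Fin.cons_zero, Fin.cons_succ, List.prod_cons]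
        rw [hab, ← mul_assoc, ← mul_assoc]

theorem stmt9 {P : Type*} [Group P] [TopologicalSpace P] [IsTopologicalGroup P]
    [PolishSpace P] [MeasurableSpace P] [BorelSpace P]
    (G : Subgroup P) (hGborel : MeasurableSet (G : Set P))
    (N : ℕ) (hN : 1 ≤ N)
    (μ : Fin N → Measure ↥G) (hinv : ∀ j, IsTransInvGrp (μ j))
    (K : Fin N → Set ↥G) (hKc : ∀ j, IsCompact (K j))
    (hKpos : ∀ j, 0 < μ j (K j)) (hKfin : ∀ j, μ j (K j) < ⊤)
    (B : Set ↥G) (hB : MeasurableSet B)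
    (T : Set ↥G) (hT : ¬ T.Countable)
    (hdisj : T.PairwiseDisjoint fun t => (fun x => t * x) '' prodSet K)
    (hsub : ∀ t ∈ T, (fun x => t * x) '' prodSet K ⊆ B) :
    ¬ ∃ Bj : Fin N → Set ↥G, (∀ j, MeasurableSet (Bj j)) ∧ B = ⋃ j, Bj j ∧
      ∀ j, SigmaFiniteOnSet (μ j) (Bj j) := by
  haveI : SecondCountableTopology ↥G := TopologicalSpace.Subtype.secondCountableTopology (G : Set P)
  haveI : BorelSpace ↥G := Subtype.borelSpace (G : Set P)
  rintro ⟨Bj, hBjm, hBU, hBjσ⟩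
  obtain ⟨n, rfl⟩ : ∃ n, N = n + 1 := ⟨N - 1, (Nat.succ_pred_eq_of_pos hN).symm⟩
  have hKm : ∀ j, MeasurableSet (K j) := fun j => (hKc j).isClosed.measurableSet
  set μ' : Fin (n + 1) → Measure ↥G := fun j => (μ j).restrict (K j) with hμ'
  haveI hfin : ∀ j, IsFiniteMeasure (μ' j) := fun j =>
    ⟨by simpa [μ', Measure.restrict_apply_univ] using hKfin j⟩
  haveI hsf : ∀ j, SigmaFinite (μ' j) := fun j => haveI := hfin j; inferInstance
  have key : ∀ t ∈ T, ∃ (j : Fin (n + 1)) (F : Set ↥G), MeasurableSet F ∧ F ⊆ Bj j ∧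
      F ⊆ (fun x => t * x) '' prodSet K ∧ 0 < μ j F := by
    intro t ht
    set m : (Fin (n + 1) → ↥G) → ↥G := fun f => t * (List.ofFn f).prod with hm_def
    have hm : Measurable m := measurable_listOfFnProd.const_mul t
    set A : Fin (n + 1) → Set (Fin (n + 1) → ↥G) :=
      fun j => (Set.pi univ K) ∩ m ⁻¹' Bj j with hA
    have hAm : ∀ j, MeasurableSet (A j) :=
      fun j => (MeasurableSet.univ_pi fun i => hKm i).inter (hm (hBjm j))
    have hcover : Set.pi univ K ⊆ ⋃ j, A j := by
      intro f hf
      have hmem : m f ∈ B :=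
        hsub t ht ⟨(List.ofFn f).prod, ⟨f, fun j => hf j (mem_univ j), rfl⟩, rfl⟩
      rw [hBU] at hmem
      obtain ⟨j, hj⟩ := mem_iUnion.1 hmem
      exact mem_iUnion.2 ⟨j, hf, hj⟩
    have hπpos : 0 < Measure.pi μ' (Set.pi univ K) := by
      rw [Measure.pi_pi, CanonicallyOrderedAdd.prod_pos]
      intro j _
      have h : μ' j (K j) = μ j (K j) := Measure.restrict_apply_self _ _
      rw [h]
      exact hKpos j
    obtain ⟨j, hj⟩ : ∃ j, 0 < Measure.pi μ' (A j) := by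
      by_contra h
      push_neg at h
      have h0 : Measure.pi μ' (⋃ j, A j) = 0 :=
        measure_iUnion_null fun j => le_antisymm (h j) zero_le
      exact absurd (measure_mono_null hcover h0) hπpos.ne'
    set e := MeasurableEquiv.piFinSuccAbove (fun _ : Fin (n + 1) => ↥G) j with he
    have hmp := measurePreserving_piFinSuccAbove μ' j
    set ρ := Measure.pi fun i => μ' (j.succAbove i) with hρ
    set s : Set (↥G × (Fin n → ↥G)) := e.symm ⁻¹' A j with hs
    have hsm : MeasurableSet s := e.symm.measurable (hAm j)
    have hps : ((μ' j).prod ρ) s = Measure.pi μ' (A j) := by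
      have h1 := hmp.measure_preimage_equiv s
      have h2 : ⇑e ⁻¹' s = A j := by
        rw [hs, ← Set.preimage_comp]
        simp
      rw [h2] at h1
      exact h1.symm
    have hppos : 0 < (ρ.prod (μ' j)) (Prod.swap ⁻¹' s) := by
      haveI := hfin j
      rw [← Measure.prod_swap, Measure.map_apply measurable_swap (measurable_swap hsm)]
      have h3 : Prod.swap ⁻¹' (Prod.swap ⁻¹' s) = s := by ext p; simp
      rw [h3, hps]
      exact hj
    obtain ⟨y, hy⟩ : ∃ y : Fin n → ↥G, 0 < μ' j {x | (x, y) ∈ s} := by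
      by_contra h
      push_neg at h
      haveI := hfin j
      rw [Measure.prod_apply (measurable_swap hsm)] at hppos
      have h0 : (fun y => μ' j (Prod.mk y ⁻¹' (Prod.swap ⁻¹' s))) = fun _ => 0 := by
        funext y
        have h4 : Prod.mk y ⁻¹' (Prod.swap ⁻¹' s) = {x | (x, y) ∈ s} := by
          ext x; simp [Prod.swap]
        rw [h4]
        exact le_antisymm (h y) zero_le
      rw [h0, lintegral_zero] at hppos
      exact lt_irrefl 0 hppos
    set S : Set ↥G := {x | j.insertNth (α := fun _ => ↥G) x y ∈ A j} with hS
    have hsymm : ∀ x : ↥G, e.symm (x, y) = j.insertNth (α := fun _ => ↥G) x y := by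
      intro x
      simp [he, MeasurableEquiv.piFinSuccAbove, Fin.insertNthEquiv]
    have hSeq : {x : ↥G | (x, y) ∈ s} = S := by
      ext x
      simp only [hs, Set.mem_preimage, Set.mem_setOf_eq, hS, hsymm x]
    rw [hSeq] at hy
    have hins : Measurable fun x : ↥G => j.insertNth (α := fun _ => ↥G) x y := by
      have h5 : (fun x : ↥G => j.insertNth (α := fun _ => ↥G) x y)
          = fun x => e.symm (x, y) := by
        funext x; rw [hsymm x]
      rw [h5]
      exact e.symm.measurable.comp (measurable_id.prodMk measurable_const)
    have hSm : MeasurableSet S := hins (hAm j)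
    have hSK : S ⊆ K j := by
      intro x hx
      have h6 := hx.1 j (mem_univ j)
      rwa [Fin.insertNth_apply_same] at h6
    have hSpos : 0 < μ j S := by
      have h7 : μ' j S = μ j S := by
        show (μ j).restrict (K j) S = μ j S
        rw [Measure.restrict_apply hSm, inter_eq_self_of_subset_left hSK]
      rwa [h7] at hy
    obtain ⟨a, b, hab⟩ := exists_prod_insertNth j y
    set S1 := (fun x : ↥G => x * b) '' S with hS1
    have hS1m : MeasurableSet S1 := by
      have h8 : S1 = ⇑(MeasurableEquiv.mulRight b) '' S := rfl
      rw [h8]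
      exact (MeasurableEquiv.mulRight b).measurableSet_image.2 hSm
    set F := (fun z : ↥G => (t * a) * z) '' S1 with hF
    have hFm : MeasurableSet F := by
      have h9 : F = ⇑(MeasurableEquiv.mulLeft (t * a)) '' S1 := rfl
      rw [h9]
      exact (MeasurableEquiv.mulLeft (t * a)).measurableSet_image.2 hS1m
    have hmval : ∀ x : ↥G, m (j.insertNth (α := fun _ => ↥G) x y) = (t * a) * (x * b) := by
      intro x
      show t * (List.ofFn (j.insertNth (α := fun _ => ↥G) x y)).prod = (t * a) * (x * b)
      rw [hab, mul_assoc a x b, ← mul_assoc]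
    refine ⟨j, F, hFm, ?_, ?_, ?_⟩
    · rintro _ ⟨_, ⟨x, hx, rfl⟩, rfl⟩
      have hx2 : m (j.insertNth (α := fun _ => ↥G) x y) ∈ Bj j := hx.2
      rwa [hmval x] at hx2
    · rintro _ ⟨_, ⟨x, hx, rfl⟩, rfl⟩
      refine ⟨(List.ofFn (j.insertNth (α := fun _ => ↥G) x y)).prod,
        ⟨j.insertNth (α := fun _ => ↥G) x y, fun i => hx.1 i (mem_univ i), rfl⟩, ?_⟩
      show t * (List.ofFn (j.insertNth (α := fun _ => ↥G) x y)).prod = (t * a) * (x * b)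
      rw [hab, mul_assoc a x b, ← mul_assoc]
    · have h1 : μ j S1 = μ j S := (hinv j b S hSm).2
      have h2 : μ j F = μ j S1 := (hinv j (t * a) S1 hS1m).1
      rw [h2, h1]
      exact hSpos
  choose! jt Ft hFtm hFtB hFtK hFtpos using key
  choose C hCU hCfin using hBjσ
  set D : Fin (n + 1) → ℕ → Set ↥G := fun j i => toMeasurable (μ j) (C j i) with hD
  have hDm : ∀ j i, MeasurableSet (D j i) := fun j i => measurableSet_toMeasurable _ _
  have hDfin : ∀ j i, μ j (D j i) < ⊤ := fun j i => by
    show μ j (toMeasurable (μ j) (C j i)) < ⊤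
    rw [measure_toMeasurable]
    exact hCfin j i
  have hBD : ∀ j, Bj j ⊆ ⋃ i, D j i := by
    intro j
    rw [hCU j]
    exact iUnion_mono fun i => subset_toMeasurable _ _
  have hidx : ∀ t ∈ T, ∃ i, 0 < μ (jt t) (Ft t ∩ D (jt t) i) := by
    intro t ht
    by_contra h
    push_neg at h
    have hcov : Ft t ⊆ ⋃ i, (Ft t ∩ D (jt t) i) := by
      intro x hx
      obtain ⟨_, ⟨i, rfl⟩, hi⟩ := hBD (jt t) (hFtB t ht hx)
      exact mem_iUnion.2 ⟨i, hx, hi⟩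
    have h0 : μ (jt t) (Ft t) = 0 :=
      measure_mono_null hcov (measure_iUnion_null fun i => le_antisymm (h i) zero_le)
    exact absurd h0 (hFtpos t ht).ne'
  set Tji : Fin (n + 1) → ℕ → Set ↥G :=
    fun j i => {t | t ∈ T ∧ jt t = j ∧ 0 < μ j (Ft t ∩ D j i)} with hTji
  have hTsub : T ⊆ ⋃ (j : Fin (n + 1)) (i : ℕ), Tji j i := by
    intro t ht
    obtain ⟨i, hi⟩ := hidx t ht
    exact mem_iUnion.2 ⟨jt t, mem_iUnion.2 ⟨i, ht, rfl, hi⟩⟩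
  have hcnt : ∀ j i, (Tji j i).Countable := by
    intro j i
    set ν := (μ j).restrict (D j i) with hν
    haveI : IsFiniteMeasure ν :=
      ⟨by rw [hν, Measure.restrict_apply_univ]; exact hDfin j i⟩
    have hdisj2 : Pairwise (Function.onFun Disjoint fun t : Tji j i => Ft t ∩ D j i) := by
      intro t1 t2 hne
      have hT1 : (t1 : ↥G) ∈ T := t1.2.1
      have hT2 : (t2 : ↥G) ∈ T := t2.2.1
      have hne' : (t1 : ↥G) ≠ (t2 : ↥G) := fun h => hne (Subtype.ext h)
      exact Disjoint.mono (Set.inter_subset_left.trans (hFtK _ hT1))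
        (Set.inter_subset_left.trans (hFtK _ hT2)) (hdisj hT1 hT2 hne')
    have hcount := Measure.countable_meas_pos_of_disjoint_iUnion (μ := ν)
      (As := fun t : Tji j i => Ft t ∩ D j i)
      (fun t => (hFtm _ t.2.1).inter (hDm j i)) hdisj2
    have hall : {t : Tji j i | 0 < ν (Ft ↑t ∩ D j i)} = Set.univ := by
      ext t
      simp only [mem_setOf_eq, mem_univ, iff_true]
      have hνeq : ν (Ft ↑t ∩ D j i) = μ j (Ft ↑t ∩ D j i) := by
        rw [hν, Measure.restrict_apply ((hFtm _ t.2.1).inter (hDm j i)),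
          inter_assoc, inter_self]
      rw [hνeq]
      exact t.2.2.2
    rw [hall] at hcount
    exact Set.countable_coe_iff.1 (countable_univ_iff.mp hcount)
  exact hT (Set.Countable.mono hTsub
    (Set.countable_iUnion fun j => Set.countable_iUnion fun i => hcnt j i))
end

section
/- Let A ⊆ ℝ, let L > 0, and let f : A → ℝ be Lipschitz with constant L, i.e. |f(x) − f(y)| ≤ L|x − y| for all x, y ∈ A. Then for every gauge function g, 𝓗^g(f(A)) ≤ ⌈L⌉ · 𝓗^g(A), where ⌈L⌉ is the least integer ≥ L. -/
open MeasureTheory Set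

private lemma interval_split (a h : ℝ) (hh : 0 ≤ h) (N : ℕ) (hN : 0 < N) :
    Icc a (a + N * h) ⊆ ⋃ j : Fin N, Icc (a + j * h) (a + (j + 1) * h) := by
  intro y hy
  rcases eq_or_lt_of_le hh with rfl | hh'
  · refine mem_iUnion.2 ⟨⟨0, hN⟩, ?_⟩
    simp only [mul_zero, add_zero] at hy ⊢
    simpa using hy
  · obtain ⟨hy1, hy2⟩ := hy
    have hz : 0 ≤ (y - a) / h := div_nonneg (by linarith) hh'.le
    set k : ℕ := ⌊(y - a) / h⌋.toNat with hk
    have hkr : (k : ℝ) = ⌊(y - a) / h⌋ := by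
      rw [hk]
      exact_mod_cast Int.toNat_of_nonneg (Int.floor_nonneg.2 hz)
    refine mem_iUnion.2 ⟨⟨min k (N - 1), by omega⟩, ?_, ?_⟩
    · show a + ((min k (N - 1) : ℕ) : ℝ) * h ≤ y
      have h1 : ((min k (N - 1) : ℕ) : ℝ) ≤ (k : ℝ) := by
        exact_mod_cast Nat.min_le_left k (N - 1)
      have h2 : (k : ℝ) ≤ (y - a) / h := hkr ▸ Int.floor_le _
      have h3 := (le_div_iff₀ hh').1 h2
      nlinarith [mul_le_mul_of_nonneg_right h1 hh'.le]
    · show y ≤ a + (((min k (N - 1) : ℕ) : ℝ) + 1) * h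
      rcases le_or_gt k (N - 1) with hkN | hkN
      · have hmin : min k (N - 1) = k := min_eq_left hkN
        have h2 : (y - a) / h < (k : ℝ) + 1 := hkr ▸ Int.lt_floor_add_one _
        have h3 := (div_lt_iff₀ hh').1 h2
        rw [hmin]
        nlinarith
      · have hmin : min k (N - 1) = N - 1 := min_eq_right hkN.le
        have h4 : ((min k (N - 1) : ℕ) : ℝ) + 1 = (N : ℝ) := by
          rw [hmin]
          exact_mod_cast Nat.succ_pred_eq_of_pos hN
        rw [h4]
        nlinarith

open EMetric in
private lemma piece_lemma (A : Set ℝ) (f : ℝ → ℝ) (L : ℝ) (hL : 0 < L)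
    (hf : ∀ x ∈ A, ∀ y ∈ A, |f x - f y| ≤ L * |x - y|)
    (g : ℝ → ℝ) (hg : IsGauge g) (s : Set ℝ) :
    ∃ u : Fin ⌈L⌉₊ → Set ℝ,
      f '' (s ∩ A) ⊆ ⋃ j, u j ∧
      (∀ j, diam (u j) ≤ diam s) ∧
      ∑' j, (⨆ _ : (u j).Nonempty, ENNReal.ofReal (g (diam (u j)).toReal)) ≤
        (⌈L⌉₊ : ENNReal) * ⨆ _ : s.Nonempty, ENNReal.ofReal (g (diam s).toReal) := by
  have hN : 0 < ⌈L⌉₊ := Nat.ceil_pos.2 hL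
  have hLN : L ≤ (⌈L⌉₊ : ℝ) := Nat.le_ceil L
  rcases (s ∩ A).eq_empty_or_nonempty with he | ⟨x, hxs, hxA⟩
  · refine ⟨fun _ => ∅, by simp [he], fun j => by simp [EMetric.diam], ?_⟩
    simp [Set.not_nonempty_empty]
  have hsne : s.Nonempty := ⟨x, hxs⟩
  rw [iSup_pos hsne]
  rcases eq_or_ne (diam s) ⊤ with hd | hd
  · refine ⟨fun _ => univ, fun y _ => mem_iUnion.2 ⟨⟨0, hN⟩, mem_univ y⟩,
      fun j => hd ▸ le_top, ?_⟩
    have huniv : diam (univ : Set ℝ) = ⊤ := Metric.ediam_univ_of_noncompact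
    rw [tsum_fintype]
    simp only [univ_nonempty, iSup_pos, huniv, hd, Finset.sum_const, Finset.card_univ,
      Fintype.card_fin, nsmul_eq_mul]
    exact le_rfl
  -- main case : finite diameter
  set d : ℝ := (diam s).toReal with hdd
  have hd0 : 0 ≤ d := ENNReal.toReal_nonneg
  have key : ∀ y ∈ s ∩ A, ∀ z ∈ s ∩ A, |f y - f z| ≤ L * d := by
    rintro y ⟨hys, hyA⟩ z ⟨hzs, hzA⟩
    refine (hf y hyA z hzA).trans (mul_le_mul_of_nonneg_left ?_ hL.le)
    have h1 : edist y z ≤ diam s := edist_le_diam_of_mem hys hzs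
    have h2 : dist y z ≤ d := by
      rw [dist_edist]
      exact ENNReal.toReal_mono hd h1
    rwa [Real.dist_eq] at h2
  have hbdd : BddBelow (f '' (s ∩ A)) := by
    refine ⟨f x - L * d, ?_⟩
    rintro y ⟨a, ha, rfl⟩
    have := key a ha x ⟨hxs, hxA⟩
    have := abs_le.1 this
    linarith [this.1]
  set c : ℝ := sInf (f '' (s ∩ A)) with hc
  have himg : f '' (s ∩ A) ⊆ Icc c (c + L * d) := by
    rintro y ⟨a, ha, rfl⟩
    constructor
    · exact csInf_le hbdd ⟨a, ha, rfl⟩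
    · have hge : f a - L * d ≤ c := by
        refine le_csInf ⟨f x, x, ⟨hxs, hxA⟩, rfl⟩ ?_
        rintro z ⟨b, hb, rfl⟩
        have := abs_le.1 (key a ha b hb)
        linarith [this.2]
      linarith
  set h : ℝ := L * d / ⌈L⌉₊ with hh
  have hh0 : 0 ≤ h := by positivity
  have hNh : (⌈L⌉₊ : ℝ) * h = L * d := by
    have hN' : (⌈L⌉₊ : ℝ) ≠ 0 := by exact_mod_cast hN.ne'
    rw [hh]
    field_simp
  have hhd : h ≤ d := by
    rw [hh, div_le_iff₀ (by exact_mod_cast hN)]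
    nlinarith
  refine ⟨fun j => Icc (c + (j : ℕ) * h) (c + ((j : ℕ) + 1) * h), ?_, ?_, ?_⟩
  · refine himg.trans ?_
    have := interval_split c h hh0 ⌈L⌉₊ hN
    rwa [hNh] at this
  · intro j
    simp only [EMetric.diam]
    rw [Real.ediam_Icc]
    have : c + ((j : ℕ) + 1) * h - (c + (j : ℕ) * h) = h := by ring
    rw [this]
    calc ENNReal.ofReal h ≤ ENNReal.ofReal d := ENNReal.ofReal_le_ofReal hhd
      _ = diam s := ENNReal.ofReal_toReal hd
  · have hterm : ∀ j : Fin ⌈L⌉₊,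
        (⨆ _ : (Icc (c + (j : ℕ) * h) (c + ((j : ℕ) + 1) * h)).Nonempty,
          ENNReal.ofReal (g (diam (Icc (c + (j : ℕ) * h) (c + ((j : ℕ) + 1) * h))).toReal)) ≤
        ENNReal.ofReal (g d) := by
      intro j
      refine iSup_le fun _ => ?_
      simp only [EMetric.diam]
      rw [Real.ediam_Icc]
      have he : c + ((j : ℕ) + 1) * h - (c + (j : ℕ) * h) = h := by ring
      rw [he, ENNReal.toReal_ofReal hh0]
      exact ENNReal.ofReal_le_ofReal (hg.1 hh0 hd0 hhd)
    calc ∑' j, _ ≤ ∑' _ : Fin ⌈L⌉₊, ENNReal.ofReal (g d) := ENNReal.tsum_le_tsum hterm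
      _ = (⌈L⌉₊ : ENNReal) * ENNReal.ofReal (g d) := by
          rw [tsum_fintype]
          simp [Finset.card_univ, nsmul_eq_mul]

open EMetric in
theorem stmt15 (A : Set ℝ) (f : ℝ → ℝ) (L : ℝ) (hL : 0 < L)
    (hf : ∀ x ∈ A, ∀ y ∈ A, |f x - f y| ≤ L * |x - y|)
    (g : ℝ → ℝ) (hg : IsGauge g) :
    gaugeMeasure g (f '' A) ≤ (⌈L⌉₊ : ENNReal) * gaugeMeasure g A := by
  have hN : 0 < ⌈L⌉₊ := Nat.ceil_pos.2 hL
  haveI : NeZero ⌈L⌉₊ := ⟨hN.ne'⟩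
  have hN0 : (⌈L⌉₊ : ENNReal) ≠ 0 := by exact_mod_cast hN.ne'
  have hNtop : (⌈L⌉₊ : ENNReal) ≠ ⊤ := ENNReal.natCast_ne_top _
  simp only [gaugeMeasure, Measure.mkMetric_apply]
  refine iSup₂_le fun r hr => ?_
  have main : (⨅ (t : ℕ → Set ℝ) (_ : f '' A ⊆ iUnion t) (_ : ∀ n, diam (t n) ≤ r),
        ∑' n, ⨆ _ : (t n).Nonempty, ENNReal.ofReal (g (diam (t n)).toReal)) ≤
      (⌈L⌉₊ : ENNReal) * ⨅ (t : ℕ → Set ℝ) (_ : A ⊆ iUnion t) (_ : ∀ n, diam (t n) ≤ r),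
        ∑' n, ⨆ _ : (t n).Nonempty, ENNReal.ofReal (g (diam (t n)).toReal) := by
    simp only [ENNReal.mul_iInf_of_ne hN0 hNtop]
    refine le_iInf fun t => le_iInf fun hst => le_iInf fun htr => ?_
    choose u hcov hdiam hcost using fun n => piece_lemma A f L hL hf g hg (t n)
    set e : ℕ ≃ ℕ × Fin ⌈L⌉₊ := Nat.divModEquiv ⌈L⌉₊ with he
    set U : ℕ → Set ℝ := fun k => u (e k).1 (e k).2 with hU
    have hcovU : f '' A ⊆ iUnion U := by
      rintro y ⟨a, haA, rfl⟩
      obtain ⟨n, hn⟩ := mem_iUnion.1 (hst haA)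
      obtain ⟨j, hj⟩ := mem_iUnion.1 (hcov n ⟨a, ⟨hn, haA⟩, rfl⟩)
      refine mem_iUnion.2 ⟨e.symm (n, j), ?_⟩
      simpa [hU, e.apply_symm_apply] using hj
    have hdiamU : ∀ k, diam (U k) ≤ r := fun k => (hdiam _ _).trans (htr _)
    calc (⨅ (t' : ℕ → Set ℝ) (_ : f '' A ⊆ iUnion t') (_ : ∀ n, diam (t' n) ≤ r),
          ∑' n, ⨆ _ : (t' n).Nonempty, ENNReal.ofReal (g (diam (t' n)).toReal)) ≤
        ∑' k, ⨆ _ : (U k).Nonempty, ENNReal.ofReal (g (diam (U k)).toReal) := by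
          refine iInf_le_of_le U ?_
          refine iInf_le_of_le hcovU ?_
          exact iInf_le _ hdiamU
      _ = ∑' p : ℕ × Fin ⌈L⌉₊, ⨆ _ : (u p.1 p.2).Nonempty,
            ENNReal.ofReal (g (diam (u p.1 p.2)).toReal) :=
          e.tsum_eq (fun p => ⨆ _ : (u p.1 p.2).Nonempty,
            ENNReal.ofReal (g (diam (u p.1 p.2)).toReal))
      _ = ∑' n, ∑' j, ⨆ _ : (u n j).Nonempty,
            ENNReal.ofReal (g (diam (u n j)).toReal) :=
          ENNReal.tsum_prod (f := fun n j => ⨆ _ : (u n j).Nonempty,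
            ENNReal.ofReal (g (diam (u n j)).toReal))
      _ ≤ ∑' n, (⌈L⌉₊ : ENNReal) *
            ⨆ _ : (t n).Nonempty, ENNReal.ofReal (g (diam (t n)).toReal) :=
          ENNReal.tsum_le_tsum fun n => hcost n
      _ = (⌈L⌉₊ : ENNReal) * ∑' n, ⨆ _ : (t n).Nonempty,
            ENNReal.ofReal (g (diam (t n)).toReal) := ENNReal.tsum_mul_left
  refine main.trans (mul_le_mul_right ?_ _)
  exact le_iSup₂_of_le r hr le_rfl
end

section
/- Let A ⊆ ℝ and let f : A → ℝ be bi-Lipschitz, i.e. there are constants 0 < c ≤ C with c|x − y| ≤ |f(x) − f(y)| ≤ C|x − y| for all x, y ∈ A. If g is a gauge function such that 𝓗^g(A) > 0 and A is a countable union of sets of finite 𝓗^g-measure, then also 𝓗^g(f(A)) > 0 and f(A) is a countable union of sets of finite 𝓗^g-measure. -/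
open MeasureTheory Set
open scoped ENNReal NNReal

/-- Subdividing an interval into `N` pieces of length `L`. -/
lemma icc_subset_iUnion_pieces {a b L : ℝ} {N : ℕ} (hN : 0 < N) (hL : 0 ≤ L)
    (hb : b ≤ a + N * L) :
    Icc a b ⊆ ⋃ i : Fin N, Icc (a + i * L) (a + (i + 1) * L) := by
  rcases hL.eq_or_lt with h0 | hL
  · intro x hx
    refine mem_iUnion.2 ⟨⟨0, hN⟩, ?_⟩
    have hba : b ≤ a := by simpa [← h0] using hb
    have : x = a := le_antisymm (hx.2.trans hba) hx.1
    simp [this, ← h0]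
  · intro x hx
    have hxa : 0 ≤ x - a := sub_nonneg.2 hx.1
    set q := ⌊(x - a) / L⌋₊ with hq
    have hfl : (q : ℝ) ≤ (x - a) / L := Nat.floor_le (by positivity)
    have hfl2 : (x - a) / L < (q : ℝ) + 1 := Nat.lt_floor_add_one _
    have hq1 : (q : ℝ) * L ≤ x - a := by
      rw [← le_div_iff₀ hL]; exact hfl
    have hq2 : x - a < ((q : ℝ) + 1) * L := by
      rw [← div_lt_iff₀ hL]; exact hfl2
    rcases lt_or_ge q N with hqN | hqN
    · refine mem_iUnion.2 ⟨⟨q, hqN⟩, ?_⟩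
      constructor
      · simpa using by linarith
      · simpa using by linarith
    · -- then x = a + N * L, use last piece
      have h1 : (N : ℝ) * L ≤ (q : ℝ) * L := by
        have : (N : ℝ) ≤ q := by exact_mod_cast hqN
        nlinarith
      have hx2 : x = a + N * L := by
        have := hx.2
        nlinarith
      refine mem_iUnion.2 ⟨⟨N - 1, Nat.sub_lt hN one_pos⟩, ?_⟩
      have hcast : ((N - 1 : ℕ) : ℝ) = (N : ℝ) - 1 := by
        rw [Nat.cast_sub hN]; simp
      constructor
      · simp only [hcast]
        nlinarith
      · simp only [hcast]
        nlinarith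

/-- A subset of `ℝ` of diameter at most `N * d` can be covered by `N` sets of
diameter at most `d`. -/
lemma subdivide {S : Set ℝ} {d : ℝ} (hd : 0 ≤ d) {N : ℕ} (hN : 0 < N)
    (hS : EMetric.diam S ≤ ENNReal.ofReal (N * d)) :
    ∃ P : Fin N → Set ℝ, S ⊆ (⋃ i, P i) ∧ (∀ i, EMetric.diam (P i) ≤ ENNReal.ofReal d) ∧
      (∀ i, (P i).Nonempty → S.Nonempty) := by
  rcases S.eq_empty_or_nonempty with rfl | hne
  · exact ⟨fun _ => ∅, by simp, by simp [EMetric.diam], by simp⟩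
  · have hbd : Bornology.IsBounded S :=
      Metric.isBounded_iff_ediam_ne_top.2 (hS.trans_lt ENNReal.ofReal_lt_top).ne
    set a := sInf S
    set b := sSup S
    have hsub : S ⊆ Icc a b := fun x hx => ⟨csInf_le hbd.bddBelow hx, le_csSup hbd.bddAbove hx⟩
    have hba : b - a ≤ N * d := by
      rw [EMetric.diam, Real.ediam_eq hbd] at hS
      exact (ENNReal.ofReal_le_ofReal_iff (by positivity)).1 hS
    refine ⟨fun i => Icc (a + i * d) (a + (i + 1) * d), ?_, ?_, fun _ _ => hne⟩
    · exact hsub.trans (icc_subset_iUnion_pieces hN hd (by linarith))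
    · intro i
      rw [EMetric.diam, Real.ediam_Icc]
      exact ENNReal.ofReal_le_ofReal (by ring_nf; linarith [hd])

lemma le_mul_iInf {ι : Sort*} {c : ℝ≥0∞} (hc0 : c ≠ 0) (hc : c ≠ ∞) {f : ι → ℝ≥0∞} {a : ℝ≥0∞}
    (h : ∀ i, a ≤ c * f i) : a ≤ c * ⨅ i, f i := by
  rw [mul_comm, ← ENNReal.div_le_iff_le_mul (Or.inl hc0) (Or.inl hc)]
  refine le_iInf fun i => ?_
  rw [ENNReal.div_le_iff_le_mul (Or.inl hc0) (Or.inl hc), mul_comm]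
  exact h i

/-- Key lemma: the image of a set under a `K`-Lipschitz map has gauge measure at most
`⌈K⌉` times the gauge measure of the set. -/
lemma gaugeMeasure_image_le (g : ℝ → ℝ) (hg : IsGauge g) (E : Set ℝ) (h : ℝ → ℝ) (K : ℝ≥0)
    (hK : 1 ≤ K) (hh : LipschitzOnWith K h E) :
    gaugeMeasure g (h '' E) ≤ (⌈(K : ℝ)⌉₊ : ℝ≥0∞) * gaugeMeasure g E := by
  classical
  set m : ℝ≥0∞ → ℝ≥0∞ := fun d => ENNReal.ofReal (g d.toReal) with hm
  set N : ℕ := ⌈(K : ℝ)⌉₊ with hNdef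
  have hN : 0 < N := Nat.ceil_pos.2 (lt_of_lt_of_le one_pos (by exact_mod_cast hK))
  have hKN : (K : ℝ) ≤ N := Nat.le_ceil _
  have hN0 : (N : ℝ≥0∞) ≠ 0 := by exact_mod_cast hN.ne'
  have hNtop : (N : ℝ≥0∞) ≠ ∞ := ENNReal.natCast_ne_top N
  have hK'0 : (K : ℝ≥0∞) ≠ 0 := by
    simp only [ne_eq, ENNReal.coe_eq_zero]
    exact (lt_of_lt_of_le one_pos hK).ne'
  have hK'top : (K : ℝ≥0∞) ≠ ∞ := ENNReal.coe_ne_top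
  have hmono : ∀ {x y : ℝ≥0∞}, x ≤ y → y ≠ ∞ → m x ≤ m y := by
    intro x y hxy hy
    exact ENNReal.ofReal_le_ofReal
      (hg.1 ENNReal.toReal_nonneg ENNReal.toReal_nonneg (ENNReal.toReal_mono hy hxy))
  rw [gaugeMeasure, Measure.mkMetric_apply]
  refine iSup₂_le fun r hr => ?_
  set r₀ : ℝ≥0∞ := min r 1 with hr₀def
  have hr₀0 : r₀ ≠ 0 := by rw [hr₀def]; exact (lt_min hr zero_lt_one).ne'
  have hr₀top : r₀ ≠ ∞ := by simp [hr₀def]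
  set ρ : ℝ≥0∞ := r₀ / (K : ℝ≥0∞) with hρdef
  have hρ0 : 0 < ρ := ENNReal.div_pos hr₀0 hK'top
  have hρtop : ρ ≠ ∞ := (ENNReal.div_lt_top hr₀top hK'0).ne
  have hρr : ρ ≤ r := by
    calc ρ = r₀ * (K : ℝ≥0∞)⁻¹ := by rw [hρdef, div_eq_mul_inv]
      _ ≤ r₀ * 1 := mul_le_mul_right (ENNReal.inv_le_one.2 (by exact_mod_cast hK)) _
      _ = r₀ := mul_one _
      _ ≤ r := min_le_left _ _
  have hB : (⨅ (t : ℕ → Set ℝ) (_ : E ⊆ iUnion t) (_ : ∀ n, EMetric.diam (t n) ≤ ρ),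
      ∑' n, ⨆ _ : (t n).Nonempty, m (EMetric.diam (t n))) ≤ gaugeMeasure g E := by
    rw [gaugeMeasure, Measure.mkMetric_apply]
    exact le_iSup₂ (f := fun (r : ℝ≥0∞) (_ : 0 < r) =>
      ⨅ (t : ℕ → Set ℝ) (_ : E ⊆ iUnion t) (_ : ∀ n, EMetric.diam (t n) ≤ r),
        ∑' n, ⨆ _ : (t n).Nonempty, m (EMetric.diam (t n))) ρ hρ0
  refine le_trans ?_ (mul_le_mul_right hB _)
  refine le_mul_iInf hN0 hNtop fun t => le_mul_iInf hN0 hNtop fun hcov =>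
    le_mul_iInf hN0 hNtop fun hdiam => ?_
  -- now build the cover of `h '' E`
  have hdt : ∀ n, EMetric.diam (t n) ≠ ∞ := fun n => ((hdiam n).trans_lt hρtop.lt_top).ne
  have key : ∀ n : ℕ, ∃ P : Fin N → Set ℝ,
      h '' (t n ∩ E) ⊆ (⋃ i, P i) ∧
      (∀ i, EMetric.diam (P i) ≤ EMetric.diam (t n)) ∧
      (∀ i, (P i).Nonempty → (t n ∩ E).Nonempty) := by
    intro n
    set dn : ℝ := (EMetric.diam (t n)).toReal with hdn
    have hdn0 : 0 ≤ dn := ENNReal.toReal_nonneg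
    have hofdn : ENNReal.ofReal dn = EMetric.diam (t n) := ENNReal.ofReal_toReal (hdt n)
    have himg : EMetric.diam (h '' (t n ∩ E)) ≤ ENNReal.ofReal (N * dn) := by
      have h1 : EMetric.diam (h '' (t n ∩ E)) ≤ (K : ℝ≥0∞) * EMetric.diam (t n) :=
        EMetric.diam_image_le_iff.2 fun x hx y hy =>
          le_trans (hh hx.2 hy.2) (mul_le_mul_right (EMetric.edist_le_diam_of_mem hx.1 hy.1) _)
      refine h1.trans ?_
      calc (K : ℝ≥0∞) * EMetric.diam (t n) = ENNReal.ofReal (K : ℝ) * ENNReal.ofReal dn := by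
              rw [hofdn, ENNReal.ofReal_coe_nnreal]
          _ = ENNReal.ofReal ((K : ℝ) * dn) := (ENNReal.ofReal_mul K.coe_nonneg).symm
          _ ≤ ENNReal.ofReal ((N : ℝ) * dn) :=
              ENNReal.ofReal_le_ofReal (mul_le_mul_of_nonneg_right hKN hdn0)
    obtain ⟨P, hP1, hP2, hP3⟩ := subdivide hdn0 hN himg
    exact ⟨P, hP1, fun i => (hP2 i).trans_eq hofdn, fun i hi => (hP3 i hi).of_image⟩
  choose P hP1 hP2 hP3 using key
  haveI : NeZero N := ⟨hN.ne'⟩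
  set e : ℕ ≃ ℕ × Fin N := Nat.divModEquiv N with he
  set u : ℕ → Set ℝ := fun j => P (e j).1 (e j).2 with hu
  have hucov : h '' E ⊆ iUnion u := by
    intro x hx
    obtain ⟨y, hy, rfl⟩ := hx
    obtain ⟨n, hn⟩ := mem_iUnion.1 (hcov hy)
    obtain ⟨i, hi⟩ := mem_iUnion.1 (hP1 n ⟨y, ⟨hn, hy⟩, rfl⟩)
    refine mem_iUnion.2 ⟨e.symm (n, i), ?_⟩
    show h y ∈ P (e (e.symm (n, i))).1 (e (e.symm (n, i))).2
    rw [Equiv.apply_symm_apply]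
    exact hi
  have hudiam : ∀ j, EMetric.diam (u j) ≤ r :=
    fun j => le_trans (hP2 _ _) (le_trans (hdiam _) hρr)
  refine le_trans (iInf_le_of_le u (iInf_le_of_le hucov (iInf_le_of_le hudiam le_rfl))) ?_
  -- now bound the sum
  have hterm : ∀ j : ℕ, (⨆ _ : (u j).Nonempty, m (EMetric.diam (u j))) ≤
      ⨆ _ : (t (e j).1).Nonempty, m (EMetric.diam (t (e j).1)) := by
    intro j
    refine iSup_le fun hne => ?_
    have htne : (t (e j).1).Nonempty := ((hP3 _ _ hne).mono inter_subset_left)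
    refine le_trans ?_ (le_iSup (fun _ : (t (e j).1).Nonempty =>
      m (EMetric.diam (t (e j).1))) htne)
    exact hmono (hP2 _ _) (hdt _)
  calc (∑' j, ⨆ _ : (u j).Nonempty, m (EMetric.diam (u j)))
      ≤ ∑' j, ⨆ _ : (t (e j).1).Nonempty, m (EMetric.diam (t (e j).1)) :=
        ENNReal.tsum_le_tsum hterm
    _ = ∑' p : ℕ × Fin N, ⨆ _ : (t p.1).Nonempty, m (EMetric.diam (t p.1)) :=
        e.tsum_eq (fun p : ℕ × Fin N => ⨆ _ : (t p.1).Nonempty, m (EMetric.diam (t p.1)))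
    _ = ∑' n : ℕ, ∑' _ : Fin N, ⨆ _ : (t n).Nonempty, m (EMetric.diam (t n)) :=
        ENNReal.tsum_prod (f := fun n (_ : Fin N) => ⨆ _ : (t n).Nonempty, m (EMetric.diam (t n)))
    _ = ∑' n : ℕ, (N : ℝ≥0∞) * ⨆ _ : (t n).Nonempty, m (EMetric.diam (t n)) := by
        congr 1; funext n; rw [tsum_fintype]; simp [Finset.sum_const, nsmul_eq_mul]
    _ = (N : ℝ≥0∞) * ∑' n, ⨆ _ : (t n).Nonempty, m (EMetric.diam (t n)) :=
        ENNReal.tsum_mul_left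

theorem stmt16 (A : Set ℝ) (f : ℝ → ℝ) (c C : ℝ) (hc : 0 < c) (hcC : c ≤ C)
    (hf : ∀ x ∈ A, ∀ y ∈ A,
      c * |x - y| ≤ |f x - f y| ∧ |f x - f y| ≤ C * |x - y|)
    (g : ℝ → ℝ) (hg : IsGauge g)
    (hpos : 0 < gaugeMeasure g A) (hsf : SigmaFiniteOnSet (gaugeMeasure g) A) :
    0 < gaugeMeasure g (f '' A) ∧ SigmaFiniteOnSet (gaugeMeasure g) (f '' A) := by
  have hinj : InjOn f A := by
    intro x hx y hy hxy
    have h1 := (hf x hx y hy).1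
    rw [hxy, sub_self, abs_zero] at h1
    have h2 : |x - y| = 0 := by nlinarith [abs_nonneg (x - y)]
    have h3 := abs_eq_zero.1 h2
    linarith [sub_eq_zero.1 h3]
  set K : ℝ≥0 := Real.toNNReal (max C 1) with hKdef
  have hKcoe : (K : ℝ) = max C 1 :=
    Real.coe_toNNReal _ (le_trans zero_le_one (le_max_right C 1))
  have hK1 : 1 ≤ K := by
    rw [← NNReal.coe_le_coe, hKcoe]
    simpa using le_max_right C 1
  have hfK : ∀ s, s ⊆ A → LipschitzOnWith K f s := by
    intro s hs
    rw [lipschitzOnWith_iff_dist_le_mul]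
    intro x hx y hy
    rw [Real.dist_eq, Real.dist_eq, hKcoe]
    calc |f x - f y| ≤ C * |x - y| := (hf x (hs hx) y (hs hy)).2
      _ ≤ max C 1 * |x - y| := mul_le_mul_of_nonneg_right (le_max_left _ _) (abs_nonneg _)
  set h : ℝ → ℝ := Function.invFunOn f A with hhdef
  set K' : ℝ≥0 := Real.toNNReal (max (1 / c) 1) with hK'def
  have hK'coe : (K' : ℝ) = max (1 / c) 1 :=
    Real.coe_toNNReal _ (le_trans zero_le_one (le_max_right _ 1))
  have hK'1 : 1 ≤ K' := by
    rw [← NNReal.coe_le_coe, hK'coe]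
    simpa using le_max_right (1 / c) 1
  have hhA : h '' (f '' A) = A := hinj.invFunOn_image subset_rfl
  have hhlip : LipschitzOnWith K' h (f '' A) := by
    rw [lipschitzOnWith_iff_dist_le_mul]
    rintro u hu v hv
    obtain ⟨x, hx, rfl⟩ := hu
    obtain ⟨y, hy, rfl⟩ := hv
    have hmu : h (f x) ∈ A := Function.invFunOn_mem ⟨x, hx, rfl⟩
    have hmv : h (f y) ∈ A := Function.invFunOn_mem ⟨y, hy, rfl⟩
    have hfu : f (h (f x)) = f x := Function.invFunOn_eq ⟨x, hx, rfl⟩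
    have hfv : f (h (f y)) = f y := Function.invFunOn_eq ⟨y, hy, rfl⟩
    have hl := (hf (h (f x)) hmu (h (f y)) hmv).1
    rw [hfu, hfv] at hl
    rw [Real.dist_eq, Real.dist_eq, hK'coe]
    have habs : |h (f x) - h (f y)| ≤ (1 / c) * |f x - f y| := by
      rw [div_mul_eq_mul_div, le_div_iff₀ hc]
      linarith
    calc |h (f x) - h (f y)| ≤ (1 / c) * |f x - f y| := habs
      _ ≤ max (1 / c) 1 * |f x - f y| :=
        mul_le_mul_of_nonneg_right (le_max_left _ _) (abs_nonneg _)
  constructor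
  · have hle := gaugeMeasure_image_le g hg (f '' A) h K' hK'1 hhlip
    rw [hhA] at hle
    rcases eq_or_ne (gaugeMeasure g (f '' A)) 0 with h0 | h0
    · rw [h0, mul_zero] at hle
      exact absurd (lt_of_lt_of_le hpos hle) (lt_irrefl 0)
    · exact lt_of_le_of_ne zero_le (Ne.symm h0)
  · obtain ⟨Cs, hCU, hCfin⟩ := hsf
    refine ⟨fun j => f '' Cs j, by rw [hCU, image_iUnion], fun j => ?_⟩
    have hsub : Cs j ⊆ A := hCU ▸ subset_iUnion Cs j
    have hle := gaugeMeasure_image_le g hg (Cs j) f K hK1 (hfK _ hsub)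
    exact lt_of_le_of_lt hle
      (ENNReal.mul_lt_top (ENNReal.natCast_ne_top _).lt_top (hCfin j))
end

section
/- Let A ⊆ ℝ be a non-empty Borel set such that for every t ≠ 0 the intersection A ∩ (A + t) contains at most one point (equivalently, the equation x − y = u − v has only trivial solutions in A). Then A is measured. -/
open MeasureTheory Set

/-- A Borel set `B ⊆ ℝ` is measured if some translation invariant Borel measure
assigns positive measure to `B` and `B` is a countable union of sets of finite measure. -/
def IsMeasured (B : Set ℝ) : Prop :=
  MeasurableSet B ∧ ∃ μ : Measure ℝ, IsTransInv μ ∧ 0 < μ B ∧ SigmaFiniteOnSet μ B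

/-- The sum of all real translates of a measure `ν`. -/
noncomputable def sumTrans (ν : Measure ℝ) : Measure ℝ :=
  Measure.sum (fun t : ℝ => Measure.map (fun x => x + t) ν)

lemma sumTrans_apply (ν : Measure ℝ) {E : Set ℝ} (hE : MeasurableSet E) :
    sumTrans ν E = ∑' t : ℝ, ν ((fun x => x + t) ⁻¹' E) := by
  rw [sumTrans, Measure.sum_apply _ hE]
  exact tsum_congr fun t => Measure.map_apply (measurable_add_const t) hE

lemma image_add_eq_preimage (s : ℝ) (E : Set ℝ) :
    (fun x => x + s) '' E = (fun x => x + (-s)) ⁻¹' E := by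
  ext x
  constructor
  · rintro ⟨a, ha, rfl⟩
    simpa using ha
  · intro hx
    exact ⟨x + (-s), hx, by ring⟩

lemma sumTrans_transInv (ν : Measure ℝ) : IsTransInv (sumTrans ν) := by
  intro s E hE
  have hF : MeasurableSet ((fun x => x + s) '' E) := by
    rw [image_add_eq_preimage]
    exact hE.preimage (measurable_add_const _)
  rw [sumTrans_apply ν hF, sumTrans_apply ν hE]
  have key : ∀ t : ℝ, (fun x => x + t) ⁻¹' ((fun x => x + s) '' E)
      = (fun x => x + (t - s)) ⁻¹' E := by
    intro t
    rw [image_add_eq_preimage]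
    ext x
    have : x + t + -s = x + (t - s) := by ring
    simp [Set.mem_preimage, this]
  simp_rw [key]
  exact (Equiv.subRight s).tsum_eq (fun u => ν ((fun x => x + u) ⁻¹' E))

theorem stmt17 (A : Set ℝ) (hA : MeasurableSet A) (hne : A.Nonempty)
    (h : ∀ t : ℝ, t ≠ 0 → (A ∩ ((fun x => x + t) '' A)).Subsingleton) :
    IsMeasured A := by
  refine ⟨hA, ?_⟩
  by_cases hc : A.Countable
  · -- countable case: sum of translates of a Dirac measure (counting measure)
    obtain ⟨a₀, ha₀⟩ := hne
    set ν : Measure ℝ := Measure.dirac a₀ with hν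
    refine ⟨sumTrans ν, sumTrans_transInv ν, ?_, ?_⟩
    · have h0 : ν ((fun x => x + (0:ℝ)) ⁻¹' A) = 1 := by
        apply Measure.dirac_apply_of_mem
        simpa using ha₀
      have hle : (1 : ENNReal) ≤ sumTrans ν A := by
        rw [sumTrans_apply ν hA, ← h0]
        exact ENNReal.le_tsum 0
      exact lt_of_lt_of_le (by norm_num) hle
    · obtain ⟨f, rfl⟩ := hc.exists_eq_range ⟨a₀, ha₀⟩
      refine ⟨fun j => {f j}, by rw [← Set.range_eq_iUnion], fun j => ?_⟩
      have hsing : ∀ x : ℝ, sumTrans ν {x} = 1 := by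
        intro x
        rw [sumTrans_apply ν (measurableSet_singleton x)]
        have hpre : ∀ t : ℝ, (fun y => y + t) ⁻¹' {x} = {x - t} := by
          intro t; ext y; simp [sub_eq_add_neg, eq_comm]
        have : ∀ t : ℝ, ν ((fun y => y + t) ⁻¹' {x}) = if a₀ = x - t then 1 else 0 := by
          intro t
          rw [hpre t, hν, Measure.dirac_apply' _ (measurableSet_singleton _)]
          by_cases hax : a₀ = x - t <;> simp [hax]
        rw [tsum_eq_single (x - a₀) ?_]
        · rw [this]; simp
        · intro t ht
          rw [this]
          have : ¬ a₀ = x - t := by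
            intro hh
            exact ht (by rw [hh]; ring)
          simp [this]
      rw [hsing (f j)]
      exact ENNReal.one_lt_top
  · -- uncountable case: sum of translates of an atomless measure concentrated on A
    haveI := hA.standardBorel
    have hnc : ¬Countable ↥A := by rwa [Set.countable_coe_iff]
    have hncR : ¬Countable ℝ := not_countable
    let e : ↥A ≃ᵐ ℝ := PolishSpace.measurableEquivOfNotCountable hnc hncR
    let f : ℝ → ℝ := fun x => ((e.symm x : A) : ℝ)
    have hf : Measurable f := measurable_subtype_coe.comp e.symm.measurable
    have hfinj : Function.Injective f := Subtype.coe_injective.comp e.symm.injective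
    have hfmem : ∀ x, f x ∈ A := fun x => (e.symm x).2
    set ν : Measure ℝ := Measure.map f (volume.restrict (Set.Icc (0:ℝ) 1)) with hνdef
    have hνA : ν A = 1 := by
      rw [hνdef, Measure.map_apply hf hA]
      have : f ⁻¹' A = Set.univ := Set.eq_univ_of_forall fun x => hfmem x
      rw [this, Measure.restrict_apply_univ, Real.volume_Icc]
      norm_num
    have hνsub : ∀ s : Set ℝ, s.Subsingleton → ν s = 0 := by
      intro s hs
      rcases hs.eq_empty_or_singleton with rfl | ⟨x, rfl⟩
      · exact measure_empty
      · rw [hνdef, Measure.map_apply hf (measurableSet_singleton x)]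
        have hsub : (f ⁻¹' {x}).Subsingleton := fun a ha b hb =>
          hfinj (ha.trans hb.symm)
        have h0 : volume (f ⁻¹' {x}) = 0 := hsub.countable.measure_zero _
        exact le_antisymm (le_trans (Measure.restrict_le_self _) h0.le) zero_le
    have hνAc : ν Aᶜ = 0 := by
      rw [hνdef, Measure.map_apply hf hA.compl]
      have : f ⁻¹' Aᶜ = ∅ := by
        ext x; simp [hfmem x]
      simp [this]
    have hterm : ∀ t : ℝ, t ≠ 0 → ν ((fun x => x + t) ⁻¹' A) = 0 := by
      intro t ht
      set S : Set ℝ := (fun x => x + t) ⁻¹' A with hS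
      have hsubset : S ∩ A ⊆ A ∩ ((fun x => x + (-t)) '' A) := by
        rintro x ⟨hxS, hxA⟩
        refine ⟨hxA, ⟨x + t, hxS, by ring⟩⟩
      have hSA : ν (S ∩ A) = 0 := by
        have hss : (S ∩ A).Subsingleton :=
          Set.Subsingleton.anti (h (-t) (neg_ne_zero.mpr ht)) hsubset
        exact hνsub _ hss
      have : ν S ≤ ν (S ∩ A) + ν Aᶜ := by
        calc ν S ≤ ν ((S ∩ A) ∪ Aᶜ) := measure_mono (fun x hx => by
              by_cases hxA : x ∈ A
              · exact Or.inl ⟨hx, hxA⟩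
              · exact Or.inr hxA)
          _ ≤ ν (S ∩ A) + ν Aᶜ := measure_union_le _ _
      rw [hSA, hνAc] at this
      simpa using this
    have hμA : sumTrans ν A = 1 := by
      rw [sumTrans_apply ν hA, tsum_eq_single 0 ?_]
      · simpa using hνA
      · intro t ht
        exact hterm t ht
    refine ⟨sumTrans ν, sumTrans_transInv ν, ?_, ?_⟩
    · rw [hμA]; norm_num
    · exact ⟨fun _ => A, (Set.iUnion_const A).symm, fun j => by rw [hμA]; exact ENNReal.one_lt_top⟩
end
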